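/- arXiv:2605.20664 — 7 statements merged into one kernel-verified Lean document; each statement's English description precedes it below -/
import Mathlib

section
/- Let k be a commutative ring, A, B₁, …, Bₙ be k-algebras, g_i : A → B_i be k-algebra homomorphisms giving each B_i the structure of an A-module via g_i, and let φ_{i,j} : B_i × B_j → B_{i+j} (1 ≤ i,j ≤ n−1, i+j ≤ n) be maps satisfying the conditions of the n-trivial extension construction (A-bilinearity, commutativity, associativity). Let π : A ⋉ₙ B₁ ⋉ ⋯ ⋉ Bₙ → A be the projection onto the first component. Then the assignment ((g₁,…,gₙ), D₁, …, Dₙ) ↦ φ, where φ(a) = (a, D₁(a), …, Dₙ(a)), is a bijection from the set of multi Hasse–Schmidt derivations (D⃗₀, D₁, …, Dₙ) of order n from A to B₁,…,Bₙ over k with respect to φ = {φ_{i,j}} satisfying D₀ⁱ = g_i for all i, onto the set of k-algebra homomorphisms φ : A → A ⋉ₙ B₁ ⋉ ⋯ ⋉ Bₙ with π ∘ φ = Id_A. -/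
/-- A multi Hasse–Schmidt derivation of order `n` from `A` to `B 1, …, B n` over `k` with
respect to the family of products `φ i j : B i → B j → B (i+j)`.  The data is the vector
`D0 = (D₀¹,…,D₀ⁿ)` of `k`-algebra homomorphisms and the maps `D = (D₁,…,Dₙ)`, where the
component of index `i : Fin n` corresponds to the index `i+1` of the paper. -/
def IsMultiHSDer (k : Type*) [CommRing k] {A : Type*} [CommRing A] [Algebra k A]
    {B : ℕ → Type*} [∀ i, CommRing (B i)] [∀ i, Algebra k (B i)]
    (n : ℕ) (φ : ∀ i j, B i → B j → B (i + j))
    (D0 D : ∀ i : Fin n, A → B (i.1 + 1)) : Prop :=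
  (∀ i : Fin n, ∀ x y : A, D0 i (x * y) = D0 i x * D0 i y) ∧
  (∀ i : Fin n, ∀ x y : A, D0 i (x + y) = D0 i x + D0 i y) ∧
  (∀ i : Fin n, D0 i 1 = 1) ∧
  (∀ i : Fin n, ∀ c : k, D0 i (algebraMap k A c) = algebraMap k (B (i.1 + 1)) c) ∧
  (∀ i : Fin n, ∀ x y : A, D i (x + y) = D i x + D i y) ∧
  (∀ i : Fin n, ∀ c : k, D i (algebraMap k A c) = 0) ∧
  (∀ i : Fin n, ∀ x y : A,
    D i (x * y) = D0 i x * D i y + D0 i y * D i x +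
      ∑ j : Fin i.1,
        cast (congrArg B (by have := j.2; have := i.2; omega : (j.1 + 1) + (i.1 - j.1) = i.1 + 1))
          (φ (j.1 + 1) (i.1 - j.1) (D ⟨j.1, by have := j.2; have := i.2; omega⟩ x)
            (cast (congrArg B (by have := j.2; omega : (i.1 - j.1 - 1) + 1 = i.1 - j.1))
              (D ⟨i.1 - j.1 - 1, by have := j.2; have := i.2; omega⟩ y))))

/-- The multiplication of the `n`-trivial extension `A ⋉ₙ B₁ ⋉ ⋯ ⋉ Bₙ` (encoded as
`A × ∀ i : Fin n, B (i+1)`), where products with the `A`-component are via the `A`-module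
structures induced by the maps `g i : A → B i` and products of `B`-components are the maps
`φ i j`. -/
def multiExtMul {A : Type*} [CommRing A] {B : ℕ → Type*} [∀ i, CommRing (B i)]
    (n : ℕ) (g : ∀ i, A → B i) (φ : ∀ i j, B i → B j → B (i + j))
    (x y : A × ∀ i : Fin n, B (i.1 + 1)) : A × ∀ i : Fin n, B (i.1 + 1) :=
  ⟨x.1 * y.1, fun l =>
    g (l.1 + 1) x.1 * y.2 l + g (l.1 + 1) y.1 * x.2 l +
      ∑ j : Fin l.1,
        cast (congrArg B (by have := j.2; have := l.2; omega : (j.1 + 1) + (l.1 - j.1) = l.1 + 1))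
          (φ (j.1 + 1) (l.1 - j.1) (x.2 ⟨j.1, by have := j.2; have := l.2; omega⟩)
            (cast (congrArg B (by have := j.2; omega : (l.1 - j.1 - 1) + 1 = l.1 - j.1))
              (y.2 ⟨l.1 - j.1 - 1, by have := j.2; have := l.2; omega⟩)))⟩

/-- The set of multi Hasse–Schmidt derivations `((g₁,…,gₙ),D₁,…,Dₙ)` of order `n` from `A`
to `B₁,…,Bₙ` over `k` with respect to `φ` whose zeroth components are the given `k`-algebra
homomorphisms `g_i`, is in bijective correspondence with the set of `k`-algebra
homomorphisms `F : A → A ⋉ₙ B₁ ⋉ ⋯ ⋉ Bₙ` with `π ∘ F = Id_A`, via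
`((g₁,…,gₙ),D₁,…,Dₙ) ↦ (a ↦ (a, D₁(a), …, Dₙ(a)))`. -/
theorem multiHSDer_equiv_hom_trivExt (k : Type*) [CommRing k] {A : Type*} [CommRing A]
    [Algebra k A] {B : ℕ → Type*} [∀ i, CommRing (B i)] [∀ i, Algebra k (B i)]
    (n : ℕ) (hn : 1 ≤ n) (g : ∀ i, A → B i)
    (hg_mul : ∀ i, 1 ≤ i → i ≤ n → ∀ x y : A, g i (x * y) = g i x * g i y)
    (hg_add : ∀ i, 1 ≤ i → i ≤ n → ∀ x y : A, g i (x + y) = g i x + g i y)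
    (hg_one : ∀ i, 1 ≤ i → i ≤ n → g i 1 = 1)
    (hg_alg : ∀ i, 1 ≤ i → i ≤ n → ∀ c : k, g i (algebraMap k A c) = algebraMap k (B i) c)
    (φ : ∀ i j, B i → B j → B (i + j))
    (hadd_left : ∀ i j, 1 ≤ i → 1 ≤ j → i + j ≤ n → ∀ (m m' : B i) (m'' : B j),
      φ i j (m + m') m'' = φ i j m m'' + φ i j m' m'')
    (hadd_right : ∀ i j, 1 ≤ i → 1 ≤ j → i + j ≤ n → ∀ (m : B i) (m' m'' : B j),
      φ i j m (m' + m'') = φ i j m m' + φ i j m m'')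
    (hsmul_left : ∀ i j, 1 ≤ i → 1 ≤ j → i + j ≤ n → ∀ (a : A) (m : B i) (m' : B j),
      φ i j (g i a * m) m' = g (i + j) a * φ i j m m')
    (hsmul_right : ∀ i j, 1 ≤ i → 1 ≤ j → i + j ≤ n → ∀ (a : A) (m : B i) (m' : B j),
      φ i j m (g j a * m') = g (i + j) a * φ i j m m')
    (hcomm : ∀ i j, 1 ≤ i → 1 ≤ j → i + j ≤ n → ∀ (m : B i) (m' : B j),
      φ i j m m' = cast (congrArg B (Nat.add_comm j i)) (φ j i m' m))
    (hassoc : ∀ i j l, 1 ≤ i → i ≤ j → j ≤ l → i + j + l ≤ n →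
      ∀ (m : B i) (m' : B j) (m'' : B l),
        φ (i + j) l (φ i j m m') m'' =
          cast (congrArg B (Nat.add_assoc i j l).symm) (φ i (j + l) m (φ j l m' m''))) :
    ∃ e : {D : ∀ i : Fin n, A → B (i.1 + 1) //
            IsMultiHSDer k n φ (fun i : Fin n => g (i.1 + 1)) D} ≃
        {F : A → A × ∀ i : Fin n, B (i.1 + 1) //
          (∀ x y : A, F (x + y) = F x + F y) ∧
          (∀ x y : A, F (x * y) = multiExtMul n g φ (F x) (F y)) ∧
          (F 1 = ⟨1, 0⟩) ∧
          (∀ c : k, F (algebraMap k A c) = ⟨algebraMap k A c, 0⟩) ∧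
          (∀ a : A, (F a).1 = a)},
      ∀ D, ∀ a : A, (e D).1 a = ⟨a, fun i : Fin n => D.1 i a⟩ := by
  refine ⟨⟨fun D => ⟨fun a => ⟨a, fun i => D.1 i a⟩, by
      obtain ⟨h1, h2, h3, h4, hDa, hDk, hDl⟩ := D.2
      refine ⟨?_, ?_, ?_, ?_, ?_⟩
      · intro x y
        refine Prod.ext rfl (funext fun i => hDa i x y)
      · intro x y
        refine Prod.ext rfl (funext fun l => hDl l x y)
      · refine Prod.ext rfl (funext fun i => ?_)
        have h := hDk i 1
        rwa [map_one] at h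
      · intro c
        refine Prod.ext rfl (funext fun i => hDk i c)
      · intro a; rfl⟩,
    fun F => ⟨fun i a => (F.1 a).2 i, by
      obtain ⟨hFa, hFm, hF1, hFk, hFp⟩ := F.2
      refine ⟨?_, ?_, ?_, ?_, ?_, ?_, ?_⟩
      · exact fun i x y => hg_mul (i.1 + 1) (Nat.succ_le_succ (Nat.zero_le _)) i.2 x y
      · exact fun i x y => hg_add (i.1 + 1) (Nat.succ_le_succ (Nat.zero_le _)) i.2 x y
      · exact fun i => hg_one (i.1 + 1) (Nat.succ_le_succ (Nat.zero_le _)) i.2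
      · exact fun i c => hg_alg (i.1 + 1) (Nat.succ_le_succ (Nat.zero_le _)) i.2 c
      · intro i x y
        show (F.1 (x + y)).2 i = (F.1 x).2 i + (F.1 y).2 i
        rw [hFa]; rfl
      · intro i c
        show (F.1 (algebraMap k A c)).2 i = 0
        rw [hFk]; rfl
      · intro i x y
        show (F.1 (x * y)).2 i = _
        rw [hFm x y]
        show g (i.1 + 1) (F.1 x).1 * (F.1 y).2 i + g (i.1 + 1) (F.1 y).1 * (F.1 x).2 i + _ = _
        rw [hFp x, hFp y]⟩,
    fun D => Subtype.ext rfl,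
    fun F => Subtype.ext (funext fun a => Prod.ext (F.2.2.2.2.2 a).symm rfl)⟩,
    fun D a => rfl⟩
end

section
/- Let k be a commutative ring, A, B₁, …, Bₙ be k-algebras, and φ_{ij} : B_i → B_j be k-algebra homomorphisms for 1 ≤ i ≤ j ≤ n with φ_{jj} = Id_{B_j} and φ_{ik} = φ_{jk} ∘ φ_{ij} for i < j < k. Define φ_{i,j} : B_i × B_j → B_{i+j} by (b_i, b_j) ↦ φ_{i,i+j}(b_i) · φ_{j,i+j}(b_j). Let (E⃗₀, E₁, …, Eₙ) be a multi Hasse–Schmidt derivation of order n from A to B₁,…,Bₙ over k with respect to φ = {φ_{i,j}} such that E₀^j = φ_{1j} ∘ E₀¹ for all 1 ≤ j ≤ n. Then for each j ∈ {1,…,n}, the sequence (E₀^j, φ_{1j}∘E₁, φ_{2j}∘E₂, …, φ_{j−1,j}∘E_{j−1}, E_j) is a Hasse–Schmidt derivation of order j from A to B_j over k. -/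
/-- A Hasse–Schmidt derivation of order `n` from `A` to `B` over `k`. -/
def IsHSDer (k : Type*) [CommRing k] {A B : Type*} [CommRing A] [CommRing B]
    [Algebra k A] [Algebra k B] (n : ℕ) (E : Fin (n + 1) → A → B) : Prop :=
  (∀ x y : A, E 0 (x * y) = E 0 x * E 0 y) ∧
  (∀ x y : A, E 0 (x + y) = E 0 x + E 0 y) ∧
  (E 0 1 = 1) ∧
  (∀ c : k, E 0 (algebraMap k A c) = algebraMap k B c) ∧
  (∀ i : Fin (n + 1), 0 < i.1 → ∀ x y : A, E i (x + y) = E i x + E i y) ∧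
  (∀ i : Fin (n + 1), 0 < i.1 → ∀ c : k, E i (algebraMap k A c) = 0) ∧
  (∀ l : Fin (n + 1), ∀ x y : A,
    E l (x * y) = ∑ j : Fin (l.1 + 1),
      E ⟨j.1, by have := j.2; have := l.2; omega⟩ x *
        E ⟨l.1 - j.1, by have := l.2; omega⟩ y)

/-- Given `k`-algebra homomorphisms `φ_{ij} : B_i → B_j` (`1 ≤ i ≤ j ≤ n`) with
`φ_{jj} = Id` and `φ_{ik} = φ_{jk} ∘ φ_{ij}` for `i < j < k`, products
`φ_{i,j}(b_i,b_j) = φ_{i,i+j}(b_i)·φ_{j,i+j}(b_j)`, and a multi Hasse–Schmidt derivation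
`(E⃗₀,E₁,…,Eₙ)` of order `n` from `A` to `B₁,…,Bₙ` over `k` with `E₀^j = φ_{1j} ∘ E₀¹`,
for each `j ∈ {1,…,n}` the sequence
`(E₀^j, φ_{1j}∘E₁, φ_{2j}∘E₂, …, φ_{j−1,j}∘E_{j−1}, φ_{jj}∘E_j (= E_j))` is a
Hasse–Schmidt derivation of order `j` from `A` to `B_j` over `k` (this is the map `β_j`). -/
theorem beta_j_mem_hsDer (k : Type*) [CommRing k] {A : Type*} [CommRing A]
    [Algebra k A] {B : ℕ → Type*} [∀ i, CommRing (B i)] [∀ i, Algebra k (B i)]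
    (n : ℕ) (hn : 1 ≤ n) (phi : ∀ i j, B i → B j)
    (hphi_mul : ∀ i j, 1 ≤ i → i ≤ j → j ≤ n → ∀ b b' : B i,
      phi i j (b * b') = phi i j b * phi i j b')
    (hphi_add : ∀ i j, 1 ≤ i → i ≤ j → j ≤ n → ∀ b b' : B i,
      phi i j (b + b') = phi i j b + phi i j b')
    (hphi_one : ∀ i j, 1 ≤ i → i ≤ j → j ≤ n → phi i j (1 : B i) = 1)
    (hphi_alg : ∀ i j, 1 ≤ i → i ≤ j → j ≤ n → ∀ c : k,
      phi i j (algebraMap k (B i) c) = algebraMap k (B j) c)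
    (hphi_id : ∀ j, 1 ≤ j → j ≤ n → ∀ b : B j, phi j j b = b)
    (hphi_comp : ∀ i j l, 1 ≤ i → i < j → j < l → l ≤ n → ∀ b : B i,
      phi i l b = phi j l (phi i j b))
    (E0 E : ∀ i : Fin n, A → B (i.1 + 1))
    (hE : IsMultiHSDer k n
      (fun i j (b : B i) (b' : B j) => phi i (i + j) b * phi j (i + j) b') E0 E)
    (hstar : ∀ i : Fin n, ∀ a : A,
      E0 i a = phi 1 (i.1 + 1) (E0 ⟨0, by have := i.2; omega⟩ a)) :
    ∀ j : Fin n,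
      IsHSDer k (j.1 + 1) (fun l : Fin (j.1 + 2) =>
        if h : l.1 = 0 then E0 j
        else fun a : A =>
          phi l.1 (j.1 + 1)
            (cast (congrArg B (by omega : (l.1 - 1) + 1 = l.1))
              (E ⟨l.1 - 1, by have := l.2; have := j.2; omega⟩ a))) := by

  obtain ⟨hmul0, hadd0, hone0, halg0, haddE, halgE, hprodE⟩ := hE
  have phi_cast : ∀ (a b q : ℕ) (h : a = b) (z : B a),
      phi b q (cast (congrArg B h) z) = phi a q z := by
    rintro a b q rfl z; rfl
  have phi_zero : ∀ p q, 1 ≤ p → p ≤ q → q ≤ n → phi p q (0 : B p) = 0 := by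
    intro p q h1 h2 h3
    have h := hphi_add p q h1 h2 h3 0 0
    rw [add_zero] at h
    exact (add_eq_left.mp h.symm)
  have phi_comp' : ∀ p q r, 1 ≤ p → p ≤ q → q ≤ r → r ≤ n → ∀ b : B p,
      phi q r (phi p q b) = phi p r b := by
    intro p q r h1 h2 h3 h4 b
    rcases eq_or_lt_of_le h2 with rfl | h2'
    · rw [hphi_id p h1 (le_trans h3 h4)]
    · rcases eq_or_lt_of_le h3 with rfl | h3'
      · rw [hphi_id q (le_trans h1 h2) h4]
      · exact (hphi_comp p q r h1 h2' h3' h4 b).symm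
  have phi_sum : ∀ (p q : ℕ), 1 ≤ p → p ≤ q → q ≤ n → ∀ (m : ℕ) (f : Fin m → B p),
      phi p q (∑ t, f t) = ∑ t, phi p q (f t) := by
    intro p q h1 h2 h3 m f
    induction m with
    | zero => simpa using phi_zero p q h1 h2 h3
    | succ m ih =>
      rw [Fin.sum_univ_castSucc, Fin.sum_univ_castSucc, hphi_add p q h1 h2 h3, ih]
  intro j
  have hjn : j.1 + 1 ≤ n := j.2
  have keyF : ∀ (a b : ℕ) (h : a = b) (ha : a < n) (hb : b < n) (q : ℕ) (w : A),
      phi (a+1) q (E ⟨a, ha⟩ w) = phi (b+1) q (E ⟨b, hb⟩ w) := by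
    rintro a b rfl ha hb q w; rfl
  have hE0j : ∀ (m : ℕ) (hm : m < n) (hmj : m ≤ j.1) (w : A),
      phi (m+1) (j.1+1) (E0 ⟨m, hm⟩ w) = E0 j w := by
    intro m hm hmj w
    rw [hstar ⟨m, hm⟩, hstar j]
    exact phi_comp' 1 (m+1) (j.1+1) le_rfl (by omega) (by omega) (by omega) _
  have h0 : ((0 : Fin (j.1+2)) : ℕ) = 0 := rfl
  refine ⟨?_, ?_, ?_, ?_, ?_, ?_, ?_⟩
  · intro x y; beta_reduce; rw [dif_pos h0]; exact hmul0 j x y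
  · intro x y; beta_reduce; rw [dif_pos h0]; exact hadd0 j x y
  · beta_reduce; rw [dif_pos h0]
    have := hone0 j
    calc E0 j (1 : A) = E0 j (algebraMap k A 1) := by rw [map_one]
    _ = (1 : B (j.1+1)) := by rw [halg0 j, map_one]
  · intro c; beta_reduce; rw [dif_pos h0]; exact halg0 j c
  · intro i hi x y; beta_reduce; rw [dif_neg (by omega : ¬ (i : ℕ) = 0)]
    rw [phi_cast, phi_cast, phi_cast, haddE]
    · exact hphi_add ((i:ℕ)-1+1) ((j:ℕ)+1) (by omega) (by have := i.2; omega) hjn _ _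
    all_goals (show (i:ℕ)-1+1 = (i:ℕ); omega)
  · intro i hi c; beta_reduce; rw [dif_neg (by omega : ¬ (i : ℕ) = 0)]
    rw [phi_cast, halgE]
    · exact phi_zero ((i:ℕ)-1+1) ((j:ℕ)+1) (by omega) (by have := i.2; omega) hjn
    all_goals (show (i:ℕ)-1+1 = (i:ℕ); omega)
  · intro l x y
    rcases l with ⟨lv, hlv⟩
    rcases Nat.eq_zero_or_pos lv with rfl | hpos
    · dsimp only
      rw [Fin.sum_univ_succ, Fin.sum_univ_zero, add_zero]
      exact hmul0 j x y
    · obtain ⟨i, rfl⟩ : ∃ i, lv = i + 1 := ⟨lv - 1, by omega⟩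
      have hij : i ≤ j.1 := by omega
      have hi : i < n := by omega
      set L : Fin (j.1 + 2) → A → B (j.1 + 1) := fun l =>
        if h : l.1 = 0 then E0 j
        else fun a : A =>
          phi l.1 (j.1 + 1)
            (cast (congrArg B (by omega : (l.1 - 1) + 1 = l.1))
              (E ⟨l.1 - 1, by have := l.2; have := j.2; omega⟩ a)) with hL
      have hL0 : ∀ (p : ℕ) (hp : p < j.1 + 2) (hp0 : p = 0) (a : A),
          L ⟨p, hp⟩ a = E0 j a := by
        rintro p hp rfl a; rw [hL]; rfl
      have hLpos : ∀ (p : ℕ) (hp : p + 1 < j.1 + 2) (a : A),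
          L ⟨p + 1, hp⟩ a = phi (p + 1) (j.1 + 1) (E ⟨p, by have := j.2; omega⟩ a) := by
        intro p hp a
        rw [hL]
        exact phi_cast _ _ _ (show p + 1 - 1 + 1 = p + 1 by omega) _
      have hLmid : ∀ (m : Fin i) (hp : i - m.1 < j.1 + 2) (a : A),
          L ⟨i - m.1, hp⟩ a
            = phi (i - m.1 - 1 + 1) (j.1 + 1)
                (E ⟨i - m.1 - 1, by have := m.2; have := j.2; omega⟩ a) := by
        intro m hp a
        have hm := m.2
        rw [show (⟨i - m.1, hp⟩ : Fin (j.1 + 2)) = ⟨i - m.1 - 1 + 1, by omega⟩ from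
          Fin.ext (show i - m.1 = i - m.1 - 1 + 1 by omega)]
        exact hLpos (i - m.1 - 1) (by omega) a
      have part1 : phi (i + 1) (j.1 + 1) (E ⟨i, hi⟩ (x * y)) =
          E0 j x * phi (i + 1) (j.1 + 1) (E ⟨i, hi⟩ y)
            + E0 j y * phi (i + 1) (j.1 + 1) (E ⟨i, hi⟩ x)
            + ∑ m : Fin i,
                phi (m.1 + 1) (j.1 + 1) (E ⟨m.1, by have := m.2; omega⟩ x)
                  * phi (i - m.1 - 1 + 1) (j.1 + 1)
                      (E ⟨i - m.1 - 1, by have := m.2; omega⟩ y) := by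
        rw [hprodE ⟨i, hi⟩ x y]
        dsimp only
        rw [hphi_add (i + 1) (j.1 + 1) (by omega) (by omega) hjn]
        rw [hphi_add (i + 1) (j.1 + 1) (by omega) (by omega) hjn]
        rw [hphi_mul (i + 1) (j.1 + 1) (by omega) (by omega) hjn]
        rw [hphi_mul (i + 1) (j.1 + 1) (by omega) (by omega) hjn]
        rw [phi_sum (i + 1) (j.1 + 1) (by omega) (by omega) hjn]
        rw [hE0j i hi hij x, hE0j i hi hij y]
        congr 1
        refine Finset.sum_congr rfl fun m _ => ?_
        have hm := m.2
        rw [phi_cast _ _ _ (show m.1 + 1 + (i - m.1) = i + 1 by omega)]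
        rw [phi_cast _ _ _ (show i - m.1 - 1 + 1 = i - m.1 by omega)]
        rw [hphi_mul (m.1 + 1 + (i - m.1)) (j.1 + 1) (by omega) (by omega) hjn]
        rw [phi_comp' (m.1 + 1) (m.1 + 1 + (i - m.1)) (j.1 + 1) (by omega) (by omega)
          (by omega) hjn]
        rw [phi_comp' (i - m.1 - 1 + 1) (m.1 + 1 + (i - m.1)) (j.1 + 1) (by omega)
          (by omega) (by omega) hjn]
      have part2 : E0 j x * phi (i + 1) (j.1 + 1) (E ⟨i, hi⟩ y)
            + E0 j y * phi (i + 1) (j.1 + 1) (E ⟨i, hi⟩ x)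
            + ∑ m : Fin i,
                phi (m.1 + 1) (j.1 + 1) (E ⟨m.1, by have := m.2; omega⟩ x)
                  * phi (i - m.1 - 1 + 1) (j.1 + 1)
                      (E ⟨i - m.1 - 1, by have := m.2; omega⟩ y)
          = ∑ m : Fin (i + 1 + 1),
              L ⟨m.1, by have := m.2; omega⟩ x * L ⟨i + 1 - m.1, by omega⟩ y := by
        rw [Fin.sum_univ_succ, Fin.sum_univ_castSucc]
        simp only [Fin.val_succ, Fin.coe_castSucc, Fin.val_zero, Fin.val_last]
        simp only [show ∀ b : ℕ, i + 1 - (b + 1) = i - b from fun b => by omega,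
          Nat.sub_zero, Nat.sub_self]
        simp only [hL0, hLpos, hLmid]
        ring
      exact Eq.trans
        (phi_cast _ _ _ (show i + 1 - 1 + 1 = i + 1 by omega) (E ⟨i, hi⟩ (x * y)))
        (part1.trans part2)
end

section
/- Let A be a commutative ring, n ≥ 1, and λ_{i,j} ∈ A for 1 ≤ i,j ≤ n−1 with i+j ≤ n, satisfying λ_{i,j} = λ_{j,i}. Let Jₙ ⊂ A[t₁,…,tₙ] be the ideal generated by {t_i t_j − λ_{i,j} t_{i+j} : 1 ≤ i,j ≤ n−1, i+j ≤ n} and {t_i t_j : 1 ≤ i,j ≤ n, i+j > n}. Then every element of the quotient A[t₁,…,tₙ]/Jₙ can be written in the form a₀ + a₁ t̄₁ + ⋯ + aₙ t̄ₙ with a₀,…,aₙ ∈ A; equivalently, A[t₁,…,tₙ]/Jₙ is generated as an A-module by the images of 1, t₁, …, tₙ. -/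
open MvPolynomial

/-- The ideal `Jₙ ⊂ A[t₁,…,tₙ]` generated by
`{t_i t_j − λ_{i,j} t_{i+j} : 1 ≤ i,j ≤ n−1, i+j ≤ n}` and
`{t_i t_j : 1 ≤ i,j ≤ n, i+j > n}`; the variable of index `i : Fin n` is `t_{i+1}`. -/
noncomputable def Jideal {A : Type*} [CommRing A] (n : ℕ) (lam : ℕ → ℕ → A) :
    Ideal (MvPolynomial (Fin n) A) :=
  Ideal.span
    ({p | ∃ (i j : Fin n) (h : i.1 + j.1 + 2 ≤ n),
        p = X i * X j -
          C (lam (i.1 + 1) (j.1 + 1)) * X (⟨i.1 + j.1 + 1, by omega⟩ : Fin n)} ∪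
      {p | ∃ i j : Fin n, n < i.1 + j.1 + 2 ∧ p = X i * X j})

section Aux

variable {A : Type*} [CommRing A] (n : ℕ) (lam : ℕ → ℕ → A)

/-- representability predicate -/
def QRep (f : MvPolynomial (Fin n) A ⧸ Jideal n lam) : Prop :=
  ∃ (a0 : A) (a : Fin n → A),
    f = Ideal.Quotient.mk (Jideal n lam) (C a0 + ∑ i : Fin n, C (a i) * X i)

lemma QRep.zero : QRep n lam 0 := ⟨0, 0, by simp⟩

lemma QRep.add {f g} (hf : QRep n lam f) (hg : QRep n lam g) : QRep n lam (f + g) := by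
  obtain ⟨a0, a, rfl⟩ := hf
  obtain ⟨b0, b, rfl⟩ := hg
  refine ⟨a0 + b0, a + b, ?_⟩
  rw [← map_add]
  congr 1
  simp [map_add, add_mul, Finset.sum_add_distrib]
  ring

lemma QRep.CX (c : A) (k : Fin n) :
    QRep n lam (Ideal.Quotient.mk (Jideal n lam) (C c * X k)) := by
  refine ⟨0, Pi.single k c, ?_⟩
  congr 1
  simp [Pi.single_apply, apply_ite C, ite_mul, Finset.sum_ite_eq']

lemma QRep.Cmul {f} (c : A) (hf : QRep n lam f) :
    QRep n lam (Ideal.Quotient.mk (Jideal n lam) (C c) * f) := by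
  obtain ⟨a0, a, rfl⟩ := hf
  refine ⟨c * a0, fun j => c * a j, ?_⟩
  rw [← map_mul]
  congr 1
  simp [mul_add, Finset.mul_sum, map_mul, mul_assoc]

lemma QRep.XX (i j : Fin n) :
    QRep n lam (Ideal.Quotient.mk (Jideal n lam) (X i * X j)) := by
  by_cases h : i.1 + j.1 + 2 ≤ n
  · have hmem : (X i * X j -
        C (lam (i.1 + 1) (j.1 + 1)) * X (⟨i.1 + j.1 + 1, by omega⟩ : Fin n) :
        MvPolynomial (Fin n) A) ∈ Jideal n lam :=
      Ideal.subset_span (Or.inl ⟨i, j, h, rfl⟩)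
    have : Ideal.Quotient.mk (Jideal n lam) (X i * X j) =
        Ideal.Quotient.mk (Jideal n lam)
          (C (lam (i.1 + 1) (j.1 + 1)) * X (⟨i.1 + j.1 + 1, by omega⟩ : Fin n)) :=
      Ideal.Quotient.eq.mpr hmem
    rw [this]
    exact QRep.CX n lam _ _
  · have hmem : (X i * X j : MvPolynomial (Fin n) A) ∈ Jideal n lam :=
      Ideal.subset_span (Or.inr ⟨i, j, by omega, rfl⟩)
    rw [Ideal.Quotient.eq_zero_iff_mem.mpr hmem]
    exact QRep.zero n lam

lemma QRep.sum {s : Finset (Fin n)} {g : Fin n → MvPolynomial (Fin n) A ⧸ Jideal n lam}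
    (hg : ∀ j ∈ s, QRep n lam (g j)) : QRep n lam (∑ j ∈ s, g j) :=
  Finset.sum_induction g _ (fun _ _ => QRep.add n lam) (QRep.zero n lam) hg

end Aux

/-- Every element of `A[t₁,…,tₙ]/Jₙ` can be written in the form
`a₀ + a₁ t̄₁ + ⋯ + aₙ t̄ₙ` with `a₀,…,aₙ ∈ A`: the quotient is generated as an
`A`-module by the images of `1, t₁, …, tₙ`. -/
theorem quotient_gen_by_linear {A : Type*} [CommRing A] (n : ℕ) (hn : 1 ≤ n)
    (lam : ℕ → ℕ → A)
    (hsym : ∀ i j, 1 ≤ i → 1 ≤ j → i + j ≤ n → lam i j = lam j i) :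
    ∀ f : MvPolynomial (Fin n) A ⧸ Jideal n lam,
      ∃ (a0 : A) (a : Fin n → A),
        f = Ideal.Quotient.mk (Jideal n lam) (C a0 + ∑ i : Fin n, C (a i) * X i) := by
  have key : ∀ p : MvPolynomial (Fin n) A,
      QRep n lam (Ideal.Quotient.mk (Jideal n lam) p) := by
    intro p
    induction p using MvPolynomial.induction_on with
    | C a => exact ⟨a, 0, by simp⟩
    | add p q hp hq => rw [map_add]; exact QRep.add n lam hp hq
    | mul_X p i hp =>
      obtain ⟨a0, a, hp⟩ := hp
      have : Ideal.Quotient.mk (Jideal n lam) (p * X i) =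
          Ideal.Quotient.mk (Jideal n lam) (C a0 * X i) +
          ∑ j : Fin n, Ideal.Quotient.mk (Jideal n lam) (C (a j)) *
            Ideal.Quotient.mk (Jideal n lam) (X j * X i) := by
        rw [map_mul, hp, ← map_mul]
        simp only [add_mul, Finset.sum_mul, mul_assoc, map_add, map_sum, map_mul]
      rw [this]
      refine QRep.add n lam (QRep.CX n lam _ _) (QRep.sum n lam fun j _ => ?_)
      exact QRep.Cmul n lam _ (QRep.XX n lam j i)
  intro f
  obtain ⟨p, rfl⟩ := Ideal.Quotient.mk_surjective f
  exact key p
end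

section
/- Let k be a commutative ring, A a k-algebra, n ≥ 1, and λ_{i,j} ∈ A for 1 ≤ i,j ≤ n−1 with i+j ≤ n, satisfying λ_{i,j} = λ_{j,i} and λ_{i,j} λ_{i+j,k} = λ_{j,k} λ_{i,j+k} whenever all indices involved are in range. Set φ_{i,j} : A × A → A, (a,a′) ↦ λ_{i,j} a a′, and let Jₙ ⊂ A[t₁,…,tₙ] be the ideal generated by {t_i t_j − λ_{i,j} t_{i+j} : 1 ≤ i,j ≤ n−1, i+j ≤ n} and {t_i t_j : 1 ≤ i,j ≤ n, i+j > n}. Then the assignment (D⃗₀, D₁, …, Dₙ) ↦ φ, where φ(a) = a + Σ_{i=1}^n D_i(a) t̄_i, is a bijection from the set of multi Hasse–Schmidt derivations of order n from A to A,…,A over k with respect to φ = {φ_{i,j}} satisfying D₀ⁱ = Id_A for all i, onto the set of k-algebra homomorphisms φ : A → A[t₁,…,tₙ]/Jₙ with φ ≡ Id_A modulo the ideal ⟨t̄₁,…,t̄ₙ⟩. -/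
open MvPolynomial

section HSAuxSec

open Finset Finset.Nat

namespace HSAux

variable {A : Type*} [CommRing A]

/-- symmetry hypothesis -/
def LamSym (n : ℕ) (lam : ℕ → ℕ → A) : Prop :=
  ∀ i j, 1 ≤ i → 1 ≤ j → i + j ≤ n → lam i j = lam j i

/-- associativity hypothesis -/
def LamAssoc (n : ℕ) (lam : ℕ → ℕ → A) : Prop :=
  ∀ i j l, 1 ≤ i → 1 ≤ j → 1 ≤ l → i + j + l ≤ n →
    lam i j * lam (i + j) l = lam j l * lam i (j + l)

/-- extended structure constants -/
def Lam (lam : ℕ → ℕ → A) (j k : ℕ) : A :=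
  if j = 0 ∨ k = 0 then 1 else lam j k

lemma Lam_zero_left (lam : ℕ → ℕ → A) (k : ℕ) : Lam lam 0 k = 1 := by simp [Lam]

lemma Lam_zero_right (lam : ℕ → ℕ → A) (j : ℕ) : Lam lam j 0 = 1 := by simp [Lam]

lemma Lam_sym {n : ℕ} {lam : ℕ → ℕ → A} (hs : LamSym n lam) {j k : ℕ}
    (h : j + k ≤ n) : Lam lam j k = Lam lam k j := by
  rcases Nat.eq_zero_or_pos j with hj | hj
  · subst hj; simp [Lam]
  rcases Nat.eq_zero_or_pos k with hk | hk
  · subst hk; simp [Lam]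
  simp only [Lam, if_neg (show ¬(j = 0 ∨ k = 0) by rintro (h'|h') <;> omega),
    if_neg (show ¬(k = 0 ∨ j = 0) by rintro (h'|h') <;> omega)]
  exact hs j k hj hk h

lemma Lam_assoc {n : ℕ} {lam : ℕ → ℕ → A} (ha : LamAssoc n lam) {i j l : ℕ}
    (h : i + j + l ≤ n) :
    Lam lam i j * Lam lam (i + j) l = Lam lam j l * Lam lam i (j + l) := by
  rcases Nat.eq_zero_or_pos i with hi | hi
  · subst hi; simp [Lam_zero_left]
  rcases Nat.eq_zero_or_pos j with hj | hj
  · subst hj; simp [Lam_zero_left, Lam_zero_right]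
  rcases Nat.eq_zero_or_pos l with hl | hl
  · subst hl; simp [Lam_zero_right]
  simp only [Lam, if_neg (show ¬(i = 0 ∨ j = 0) by rintro (h'|h') <;> omega),
    if_neg (show ¬(i + j = 0 ∨ l = 0) by rintro (h'|h') <;> omega),
    if_neg (show ¬(j = 0 ∨ l = 0) by rintro (h'|h') <;> omega),
    if_neg (show ¬(i = 0 ∨ j + l = 0) by rintro (h'|h') <;> omega)]
  exact ha i j l hi hj hl h

/-- twisted convolution -/
def conv (lam : ℕ → ℕ → A) (f g : ℕ → A) (m : ℕ) : A :=
  ∑ p ∈ antidiagonal m, Lam lam p.1 p.2 * f p.1 * g p.2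

lemma conv_congr {lam : ℕ → ℕ → A} {f f' g g' : ℕ → A} {m : ℕ}
    (hf : ∀ j ≤ m, f j = f' j) (hg : ∀ j ≤ m, g j = g' j) :
    conv lam f g m = conv lam f' g' m := by
  refine Finset.sum_congr rfl fun p hp => ?_
  rw [Finset.HasAntidiagonal.mem_antidiagonal] at hp
  rw [hf p.1 (by omega), hg p.2 (by omega)]

lemma conv_add_left (lam : ℕ → ℕ → A) (f f' g : ℕ → A) (m : ℕ) :
    conv lam (fun j => f j + f' j) g m = conv lam f g m + conv lam f' g m := by
  simp only [conv, ← Finset.sum_add_distrib]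
  exact Finset.sum_congr rfl fun p _ => by ring

lemma conv_add_right (lam : ℕ → ℕ → A) (f g g' : ℕ → A) (m : ℕ) :
    conv lam f (fun j => g j + g' j) m = conv lam f g m + conv lam f g' m := by
  simp only [conv, ← Finset.sum_add_distrib]
  exact Finset.sum_congr rfl fun p _ => by ring

lemma conv_comm {n : ℕ} {lam : ℕ → ℕ → A} (hs : LamSym n lam) (f g : ℕ → A) {m : ℕ}
    (hm : m ≤ n) : conv lam f g m = conv lam g f m := by
  unfold conv
  conv_rhs => rw [← Finset.Nat.sum_antidiagonal_swap]
  refine Finset.sum_congr rfl fun p hp => ?_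
  rw [Finset.HasAntidiagonal.mem_antidiagonal] at hp
  simp only [Prod.fst_swap, Prod.snd_swap]
  rw [Lam_sym hs (show p.1 + p.2 ≤ n by omega)]
  ring

lemma sum_antidiagonal_assoc {M : Type*} [AddCommMonoid M] (F : ℕ → ℕ → ℕ → M) (m : ℕ) :
    ∑ p ∈ antidiagonal m, ∑ q ∈ antidiagonal p.1, F q.1 q.2 p.2
      = ∑ p ∈ antidiagonal m, ∑ q ∈ antidiagonal p.2, F p.1 q.1 q.2 := by
  rw [Finset.sum_sigma', Finset.sum_sigma']
  refine Finset.sum_bij' (fun x _ => ⟨(x.2.1, x.2.2 + x.1.2), (x.2.2, x.1.2)⟩)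
    (fun x _ => ⟨(x.2.1 + x.1.1, x.2.2), (x.1.1, x.2.1)⟩) ?_ ?_ ?_ ?_ ?_
  · rintro ⟨⟨a, b⟩, ⟨c, d⟩⟩ h
    simp only [Finset.mem_sigma, Finset.HasAntidiagonal.mem_antidiagonal] at h
    dsimp only
    simp only [Finset.mem_sigma, Finset.HasAntidiagonal.mem_antidiagonal]
    exact ⟨by omega, trivial⟩
  · rintro ⟨⟨a, b⟩, ⟨c, d⟩⟩ h
    simp only [Finset.mem_sigma, Finset.HasAntidiagonal.mem_antidiagonal] at h
    dsimp only
    simp only [Finset.mem_sigma, Finset.HasAntidiagonal.mem_antidiagonal]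
    exact ⟨by omega, by omega⟩
  · rintro ⟨⟨a, b⟩, ⟨c, d⟩⟩ h
    simp only [Finset.mem_sigma, Finset.HasAntidiagonal.mem_antidiagonal] at h
    dsimp only
    rw [show d + c = a by omega]
  · rintro ⟨⟨a, b⟩, ⟨c, d⟩⟩ h
    simp only [Finset.mem_sigma, Finset.HasAntidiagonal.mem_antidiagonal] at h
    dsimp only
    rw [show c + d = b by omega]
  · rintro ⟨⟨a, b⟩, ⟨c, d⟩⟩ h
    rfl

lemma conv_assoc {n : ℕ} {lam : ℕ → ℕ → A} (ha : LamAssoc n lam) (f g h : ℕ → A) {m : ℕ}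
    (hm : m ≤ n) :
    conv lam (conv lam f g) h m = conv lam f (conv lam g h) m := by
  unfold conv
  simp only [Finset.mul_sum, Finset.sum_mul]
  have L : ∀ p ∈ antidiagonal m,
      ∑ q ∈ antidiagonal p.1, Lam lam p.1 p.2 * (Lam lam q.1 q.2 * f q.1 * g q.2) * h p.2
      = ∑ q ∈ antidiagonal p.1,
          (Lam lam q.1 q.2 * Lam lam (q.1 + q.2) p.2) * (f q.1 * g q.2 * h p.2) := by
    intro p hp
    refine Finset.sum_congr rfl fun q hq => ?_
    rw [Finset.HasAntidiagonal.mem_antidiagonal] at hq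
    rw [hq]; ring
  rw [Finset.sum_congr rfl L]
  have R : ∀ p ∈ antidiagonal m,
      ∑ q ∈ antidiagonal p.2, Lam lam p.1 p.2 * f p.1 * (Lam lam q.1 q.2 * g q.1 * h q.2)
      = ∑ q ∈ antidiagonal p.2,
          (Lam lam q.1 q.2 * Lam lam p.1 (q.1 + q.2)) * (f p.1 * g q.1 * h q.2) := by
    intro p hp
    refine Finset.sum_congr rfl fun q hq => ?_
    rw [Finset.HasAntidiagonal.mem_antidiagonal] at hq
    rw [hq]; ring
  rw [Finset.sum_congr rfl R]
  rw [sum_antidiagonal_assoc (fun a b c =>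
    (Lam lam a b * Lam lam (a + b) c) * (f a * g b * h c)) m]
  refine Finset.sum_congr rfl fun p hp => Finset.sum_congr rfl fun q hq => ?_
  rw [Finset.HasAntidiagonal.mem_antidiagonal] at hp hq
  have habc : p.1 + q.1 + q.2 ≤ n := by omega
  rw [Lam_assoc ha habc]

section HSRsec

variable (n : ℕ) (lam : ℕ → ℕ → A) (hs : LamSym n lam) (ha : LamAssoc n lam)

/-- padding a finitely supported vector to `ℕ → A` -/
def pad (x : Fin (n + 1) → A) : ℕ → A := fun j => if h : j < n + 1 then x ⟨j, h⟩ else 0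

lemma pad_le {x : Fin (n + 1) → A} {j : ℕ} (h : j < n + 1) : pad n x j = x ⟨j, h⟩ := by
  simp [pad, h]

lemma pad_gt {x : Fin (n + 1) → A} {j : ℕ} (h : ¬ j < n + 1) : pad n x j = 0 := by
  simp [pad, h]

/-- the carrier of the twisted truncated polynomial ring -/
def HSR (_hs : LamSym n lam) (_ha : LamAssoc n lam) : Type _ := Fin (n + 1) → A

instance : AddCommGroup (HSR n lam hs ha) := Pi.addCommGroup

instance : Mul (HSR n lam hs ha) :=
  ⟨fun x y => fun m => conv lam (pad n x) (pad n y) m.1⟩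

instance : One (HSR n lam hs ha) := ⟨fun m => if m.1 = 0 then (1 : A) else 0⟩

lemma hsr_mul_apply (x y : HSR n lam hs ha) (m : Fin (n + 1)) :
    (x * y) m = conv lam (pad n x) (pad n y) m.1 := rfl

lemma hsr_add_apply (x y : HSR n lam hs ha) (m : Fin (n + 1)) :
    (x + y) m = x m + y m := rfl

lemma hsr_zero_apply (m : Fin (n + 1)) : (0 : HSR n lam hs ha) m = 0 := rfl

lemma hsr_one_apply (m : Fin (n + 1)) :
    (1 : HSR n lam hs ha) m = if m.1 = 0 then 1 else 0 := rfl

lemma pad_add (x y : HSR n lam hs ha) (j : ℕ) :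
    pad n (x + y) j = pad n x j + pad n y j := by
  by_cases h : j < n + 1
  · erw [pad_le n h, pad_le n h, pad_le n h]; rfl
  · erw [pad_gt n h, pad_gt n h, pad_gt n h]; ring

lemma pad_zero (j : ℕ) : pad n (0 : HSR n lam hs ha) j = 0 := by
  by_cases h : j < n + 1
  · erw [pad_le n h]; rfl
  · erw [pad_gt n h]

lemma pad_mul (x y : HSR n lam hs ha) {j : ℕ} (h : j ≤ n) :
    pad n (x * y) j = conv lam (pad n x) (pad n y) j := by
  erw [pad_le n (by omega : j < n + 1)]
  rfl

lemma hsr_one_mul (x : HSR n lam hs ha) : (1 : HSR n lam hs ha) * x = x := by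
  funext m
  rw [hsr_mul_apply, conv]
  rw [Finset.sum_eq_single (0, m.1)]
  · rw [Lam_zero_left]
    have h1 : pad n (1 : HSR n lam hs ha) 0 = 1 := by
      erw [pad_le n (by omega : 0 < n + 1)]; rfl
    erw [h1, pad_le n m.2]
    simp
  · rintro ⟨a, b⟩ hmem hne
    rw [Finset.HasAntidiagonal.mem_antidiagonal] at hmem
    have hane : a ≠ 0 := by
      intro h0; apply hne; subst h0; simp at hmem ⊢; omega
    have : pad n (1 : HSR n lam hs ha) a = 0 := by
      by_cases hcase : a < n + 1
      · erw [pad_le n hcase]; simp [hsr_one_apply, hane]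
      · erw [pad_gt n hcase]
    rw [this]; ring
  · intro hnotmem
    exfalso; apply hnotmem; rw [Finset.HasAntidiagonal.mem_antidiagonal]; simp

lemma hsr_mul_comm (x y : HSR n lam hs ha) : x * y = y * x := by
  funext m
  rw [hsr_mul_apply, hsr_mul_apply]
  exact conv_comm hs _ _ (by omega : m.1 ≤ n)

lemma hsr_mul_assoc (x y z : HSR n lam hs ha) : x * y * z = x * (y * z) := by
  funext m
  rw [hsr_mul_apply, hsr_mul_apply]
  have hm : m.1 ≤ n := by omega
  have e1 : conv lam (pad n (x * y)) (pad n z) m.1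
      = conv lam (conv lam (pad n x) (pad n y)) (pad n z) m.1 :=
    conv_congr (fun j hj => pad_mul n lam hs ha x y (by omega)) (fun _ _ => rfl)
  have e2 : conv lam (pad n x) (pad n (y * z)) m.1
      = conv lam (pad n x) (conv lam (pad n y) (pad n z)) m.1 :=
    conv_congr (fun _ _ => rfl) (fun j hj => pad_mul n lam hs ha y z (by omega))
  rw [e1, e2]
  exact conv_assoc ha _ _ _ hm

lemma hsr_left_distrib (x y z : HSR n lam hs ha) : x * (y + z) = x * y + x * z := by
  funext m
  rw [hsr_add_apply, hsr_mul_apply, hsr_mul_apply, hsr_mul_apply]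
  have : conv lam (pad n x) (pad n (y + z)) m.1
      = conv lam (pad n x) (fun j => pad n y j + pad n z j) m.1 :=
    conv_congr (fun _ _ => rfl) (fun j _ => pad_add n lam hs ha y z j)
  rw [this, conv_add_right]

lemma hsr_zero_mul (x : HSR n lam hs ha) : (0 : HSR n lam hs ha) * x = 0 := by
  funext m
  rw [hsr_mul_apply]
  refine Finset.sum_eq_zero fun p _ => ?_
  rw [pad_zero]; ring

instance : CommRing (HSR n lam hs ha) :=
  { (inferInstance : AddCommGroup (HSR n lam hs ha)) with
    mul := (· * ·)
    one := 1
    mul_assoc := hsr_mul_assoc n lam hs ha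
    one_mul := hsr_one_mul n lam hs ha
    mul_one := fun x => by
      rw [hsr_mul_comm n lam hs ha]; exact hsr_one_mul n lam hs ha x
    left_distrib := hsr_left_distrib n lam hs ha
    right_distrib := fun x y z => by
      rw [hsr_mul_comm n lam hs ha, hsr_left_distrib n lam hs ha,
        hsr_mul_comm n lam hs ha z x, hsr_mul_comm n lam hs ha z y]
    zero_mul := hsr_zero_mul n lam hs ha
    mul_zero := fun x => by
      rw [hsr_mul_comm n lam hs ha]; exact hsr_zero_mul n lam hs ha x
    mul_comm := hsr_mul_comm n lam hs ha }

/-- the embedding of `A` (bare function) -/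
def embedFun (a : A) : HSR n lam hs ha := fun m => if m.1 = 0 then a else 0

lemma embedFun_apply (a : A) (m : Fin (n + 1)) :
    embedFun n lam hs ha a m = if m.1 = 0 then a else 0 := rfl

lemma pad_embedFun (a : A) (j : ℕ) :
    pad n (embedFun n lam hs ha a) j = if j = 0 then a else 0 := by
  by_cases hj : j < n + 1
  · erw [pad_le n hj]; rfl
  · erw [pad_gt n hj, if_neg (by omega)]

lemma embedFun_mul_apply (a : A) (x : HSR n lam hs ha) (m : Fin (n + 1)) :
    (embedFun n lam hs ha a * x) m = a * x m := by
  rw [hsr_mul_apply, conv]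
  rw [Finset.sum_eq_single (0, m.1)]
  · erw [Lam_zero_left, pad_embedFun, if_pos rfl, pad_le n m.2]
    simp
  · rintro ⟨b, c⟩ hmem hne
    rw [Finset.HasAntidiagonal.mem_antidiagonal] at hmem
    have hbne : b ≠ 0 := by
      intro h0; apply hne; subst h0; simp at hmem ⊢; omega
    rw [pad_embedFun, if_neg hbne]; ring
  · intro hnotmem
    exfalso; apply hnotmem; rw [Finset.HasAntidiagonal.mem_antidiagonal]; simp

/-- the embedding of `A` as a ring homomorphism -/
def embed : A →+* HSR n lam hs ha where
  toFun := embedFun n lam hs ha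
  map_one' := rfl
  map_mul' a b := by
    funext m
    show embedFun n lam hs ha (a * b) m
      = (embedFun n lam hs ha a * embedFun n lam hs ha b) m
    rw [embedFun_mul_apply, embedFun_apply, embedFun_apply]
    by_cases hm : m.1 = 0
    · rw [if_pos hm, if_pos hm]
    · rw [if_neg hm, if_neg hm, mul_zero]
  map_zero' := by
    funext m
    show embedFun n lam hs ha 0 m = (0 : HSR n lam hs ha) m
    rw [embedFun_apply, hsr_zero_apply]
    simp
  map_add' a b := by
    funext m
    show embedFun n lam hs ha (a + b) m
      = (embedFun n lam hs ha a + embedFun n lam hs ha b) m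
    rw [embedFun_apply, hsr_add_apply, embedFun_apply, embedFun_apply]
    by_cases hm : m.1 = 0
    · rw [if_pos hm, if_pos hm, if_pos hm]
    · rw [if_neg hm, if_neg hm, if_neg hm, add_zero]

lemma embed_apply (a : A) (m : Fin (n + 1)) :
    embed n lam hs ha a m = if m.1 = 0 then a else 0 := rfl

lemma pad_embed (a : A) (j : ℕ) :
    pad n (embed n lam hs ha a) j = if j = 0 then a else 0 :=
  pad_embedFun n lam hs ha a j

lemma embed_mul_apply (a : A) (x : HSR n lam hs ha) (m : Fin (n + 1)) :
    (embed n lam hs ha a * x) m = a * x m :=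
  embedFun_mul_apply n lam hs ha a x m

/-- basis vector `t^p` -/
def eb (p : ℕ) : HSR n lam hs ha := fun m => if m.1 = p then 1 else 0

lemma eb_apply (p : ℕ) (m : Fin (n + 1)) :
    eb n lam hs ha p m = if m.1 = p then 1 else 0 := rfl

lemma pad_eb (p : ℕ) (j : ℕ) :
    pad n (eb n lam hs ha p) j = if j = p ∧ j ≤ n then 1 else 0 := by
  by_cases hj : j < n + 1
  · erw [pad_le n hj, eb_apply]
    by_cases hp : j = p
    · rw [if_pos hp, if_pos ⟨hp, by omega⟩]
    · rw [if_neg hp, if_neg (by tauto)]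
  · erw [pad_gt n hj, if_neg (by omega)]

lemma eb_gt {p : ℕ} (hp : n < p) : eb n lam hs ha p = 0 := by
  funext m
  rw [eb_apply, if_neg (by omega)]
  rfl

lemma eb_mul_eb (p q : ℕ) :
    eb n lam hs ha p * eb n lam hs ha q
      = embed n lam hs ha (Lam lam p q) * eb n lam hs ha (p + q) := by
  funext m
  rw [embed_mul_apply, hsr_mul_apply, eb_apply, conv]
  by_cases hm : m.1 = p + q
  · rw [if_pos hm, mul_one]
    rw [Finset.sum_eq_single (p, q)]
    · rw [pad_eb, pad_eb, if_pos ⟨rfl, by omega⟩, if_pos ⟨rfl, by omega⟩]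
      ring
    · rintro ⟨b, c⟩ hmem hne
      rw [Finset.HasAntidiagonal.mem_antidiagonal] at hmem
      by_cases hb : b = p
      · rw [pad_eb, pad_eb, if_neg (show ¬(c = q ∧ c ≤ n) by
          rintro ⟨h1, h2⟩; apply hne; rw [hb, h1])]
        ring
      · rw [pad_eb, if_neg (by tauto)]; ring
    · intro hnotmem
      exfalso; apply hnotmem; rw [Finset.HasAntidiagonal.mem_antidiagonal]; omega
  · rw [if_neg hm, mul_zero]
    refine Finset.sum_eq_zero fun x hx => ?_
    rw [Finset.HasAntidiagonal.mem_antidiagonal] at hx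
    by_cases hb : x.1 = p
    · rw [pad_eb, pad_eb, if_neg (show ¬(x.2 = q ∧ x.2 ≤ n) by
        rintro ⟨h1, h2⟩; omega)]
      ring
    · rw [pad_eb, if_neg (by tauto)]; ring

lemma hsr_mul_apply_zero (x y : HSR n lam hs ha) :
    (x * y) ⟨0, by omega⟩ = x ⟨0, by omega⟩ * y ⟨0, by omega⟩ := by
  rw [hsr_mul_apply]
  show conv lam _ _ 0 = _
  rw [conv]
  rw [Finset.Nat.antidiagonal_zero]
  erw [Finset.sum_singleton, Lam_zero_left, one_mul,
    pad_le n (by omega : 0 < n + 1), pad_le n (by omega : 0 < n + 1)]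

lemma hsr_mul_apply_succ (x y : HSR n lam hs ha) (m : ℕ) (hm : m + 1 ≤ n) :
    (x * y) ⟨m + 1, by omega⟩
      = x ⟨0, by omega⟩ * y ⟨m + 1, by omega⟩ + y ⟨0, by omega⟩ * x ⟨m + 1, by omega⟩
        + ∑ j : Fin m, lam (j.1 + 1) (m - j.1)
            * x ⟨j.1 + 1, by omega⟩ * y ⟨m - j.1, by omega⟩ := by
  rw [hsr_mul_apply]
  show conv lam (pad n x) (pad n y) (m + 1) = _
  rw [conv, Finset.Nat.sum_antidiagonal_eq_sum_range_succ_mk]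
  rw [Finset.sum_range_succ, Finset.sum_range_succ']
  simp only [Nat.sub_zero, Nat.sub_self, Nat.succ_sub_succ_eq_sub]
  rw [Lam_zero_left, Lam_zero_right]
  erw [
    pad_le n (by omega : (0:ℕ) < n + 1), pad_le n (by omega : m + 1 < n + 1),
    pad_le n (by omega : m + 1 < n + 1), pad_le n (by omega : (0:ℕ) < n + 1)]
  have hmid : (∑ j ∈ Finset.range m,
      Lam lam (j + 1) (m - j) * pad n x (j + 1) * pad n y (m - j))
      = ∑ j : Fin m, lam (j.1 + 1) (m - j.1)
          * x ⟨j.1 + 1, by omega⟩ * y ⟨m - j.1, by omega⟩ := by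
    rw [Finset.sum_range]
    refine Finset.sum_congr rfl fun j _ => ?_
    have hj := j.2
    rw [show Lam lam (j.1 + 1) (m - j.1) = lam (j.1 + 1) (m - j.1) by
      unfold Lam; rw [if_neg (by rintro (h' | h') <;> omega)]]
    erw [pad_le n (by omega : j.1 + 1 < n + 1), pad_le n (by omega : m - j.1 < n + 1)]
  rw [hmid]
  ring


open MvPolynomial

/-- evaluation homomorphism to `HSR` -/
noncomputable def piHom : MvPolynomial (Fin n) A →+* HSR n lam hs ha :=
  eval₂Hom (embed n lam hs ha) (fun i => eb n lam hs ha (i.1 + 1))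

lemma piHom_C (a : A) : piHom n lam hs ha (C a) = embed n lam hs ha a := by
  simp [piHom]

lemma piHom_X (i : Fin n) :
    piHom n lam hs ha (X i) = eb n lam hs ha (i.1 + 1) := by
  simp [piHom]

lemma J_le_ker : Jideal n lam ≤ RingHom.ker (piHom n lam hs ha) := by
  rw [Jideal, Ideal.span_le]
  rintro p (⟨i, j, hij, rfl⟩ | ⟨i, j, hij, rfl⟩) <;>
    rw [SetLike.mem_coe, RingHom.mem_ker]
  · rw [map_sub, map_mul, map_mul, piHom_X, piHom_X, piHom_X, piHom_C, eb_mul_eb]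
    rw [show Lam lam (i.1 + 1) (j.1 + 1) = lam (i.1 + 1) (j.1 + 1) by
      unfold Lam; rw [if_neg (by rintro (h' | h') <;> omega)]]
    rw [show i.1 + 1 + (j.1 + 1) = i.1 + j.1 + 1 + 1 by omega]
    exact sub_self _
  · rw [map_mul, piHom_X, piHom_X, eb_mul_eb, eb_gt n lam hs ha (by omega), mul_zero]

/-- the induced map on the quotient -/
noncomputable def piBar : (MvPolynomial (Fin n) A ⧸ Jideal n lam) →+* HSR n lam hs ha :=
  Ideal.Quotient.lift (Jideal n lam) (piHom n lam hs ha)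
    (fun a haJ => J_le_ker n lam hs ha haJ)

lemma piBar_mk (p : MvPolynomial (Fin n) A) :
    piBar n lam hs ha (Ideal.Quotient.mk (Jideal n lam) p) = piHom n lam hs ha p :=
  Ideal.Quotient.lift_mk _ _ _

/-- total variable function -/
noncomputable def Xn (m : ℕ) : MvPolynomial (Fin n) A :=
  if h : m < n then X ⟨m, h⟩ else 0

lemma q_XX (p q : ℕ) :
    Ideal.Quotient.mk (Jideal n lam) (Xn n p * Xn n q)
      = Ideal.Quotient.mk (Jideal n lam) (C (Lam lam (p + 1) (q + 1)) * Xn n (p + q + 1)) := by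
  by_cases hp : p < n
  · by_cases hq : q < n
    · rw [Xn, dif_pos hp, Xn, dif_pos hq]
      by_cases hpq : p + q + 2 ≤ n
      · rw [Xn, dif_pos (by omega : p + q + 1 < n)]
        rw [show Lam lam (p + 1) (q + 1) = lam (p + 1) (q + 1) by
          unfold Lam; rw [if_neg (by rintro (h' | h') <;> omega)]]
        rw [Ideal.Quotient.eq]
        refine Ideal.subset_span ?_
        rw [Set.mem_union]
        exact Or.inl ⟨⟨p, hp⟩, ⟨q, hq⟩, hpq, rfl⟩
      · rw [Xn, dif_neg (by omega : ¬ p + q + 1 < n), mul_zero, map_zero]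
        rw [Ideal.Quotient.eq_zero_iff_mem]
        refine Ideal.subset_span ?_
        rw [Set.mem_union]
        exact Or.inr ⟨⟨p, hp⟩, ⟨q, hq⟩, show n < p + q + 2 by omega, rfl⟩
    · rw [show Xn n q = (0 : MvPolynomial (Fin n) A) from dif_neg hq,
        show Xn n (p + q + 1) = (0 : MvPolynomial (Fin n) A) from
          dif_neg (by omega : ¬ p + q + 1 < n),
        mul_zero, mul_zero, map_zero]
  · rw [show Xn n p = (0 : MvPolynomial (Fin n) A) from dif_neg hp,
      show Xn n (p + q + 1) = (0 : MvPolynomial (Fin n) A) from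
        dif_neg (by omega : ¬ p + q + 1 < n),
      zero_mul, mul_zero, map_zero]

/-- the section of `piBar` -/
noncomputable def sFun (r : HSR n lam hs ha) : MvPolynomial (Fin n) A ⧸ Jideal n lam :=
  Ideal.Quotient.mk (Jideal n lam)
    (C (r ⟨0, by omega⟩) + ∑ j ∈ Finset.range n, C (pad n r (j + 1)) * Xn n j)

lemma sFun_add (r r' : HSR n lam hs ha) :
    sFun n lam hs ha (r + r') = sFun n lam hs ha r + sFun n lam hs ha r' := by
  unfold sFun
  rw [← map_add]
  congr 1
  rw [hsr_add_apply, map_add]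
  have : ∀ j ∈ Finset.range n,
      C (pad n (r + r') (j + 1)) * Xn n j
        = C (pad n r (j + 1)) * Xn n j + C (pad n r' (j + 1)) * Xn n j := by
    intro j _
    rw [pad_add, map_add, add_mul]
  rw [Finset.sum_congr rfl this, Finset.sum_add_distrib]
  ring

lemma pad_mul_eb (r : HSR n lam hs ha) {i m : ℕ} (hi : i < n) (hm : m ≤ n) :
    pad n (r * eb n lam hs ha (i + 1)) m
      = if i + 1 ≤ m then Lam lam (m - (i + 1)) (i + 1) * pad n r (m - (i + 1)) else 0 := by
  rw [pad_mul n lam hs ha _ _ hm, conv]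
  by_cases hc : i + 1 ≤ m
  · rw [if_pos hc, Finset.sum_eq_single (m - (i + 1), i + 1)]
    · rw [pad_eb, if_pos ⟨rfl, by omega⟩, mul_one]
    · rintro ⟨b, c⟩ hmem hne
      rw [Finset.HasAntidiagonal.mem_antidiagonal] at hmem
      by_cases hcc : c = i + 1
      · exfalso; apply hne; subst hcc; rw [show b = m - (i + 1) by omega]
      · rw [pad_eb, if_neg (by tauto), mul_zero]
    · intro hnot
      exact absurd (by rw [Finset.HasAntidiagonal.mem_antidiagonal]; omega) hnot
  · rw [if_neg hc]
    refine Finset.sum_eq_zero fun p hp => ?_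
    rw [Finset.HasAntidiagonal.mem_antidiagonal] at hp
    rw [pad_eb, if_neg (by rintro ⟨h1, h2⟩; omega), mul_zero]

lemma sFun_mul_X (r : HSR n lam hs ha) {i : ℕ} (hi : i < n) :
    sFun n lam hs ha (r * eb n lam hs ha (i + 1))
      = sFun n lam hs ha r * Ideal.Quotient.mk (Jideal n lam) (Xn n i) := by
  set q : MvPolynomial (Fin n) A →+* MvPolynomial (Fin n) A ⧸ Jideal n lam :=
    Ideal.Quotient.mk (Jideal n lam) with hq
  set T : ℕ → MvPolynomial (Fin n) A ⧸ Jideal n lam := (fun m =>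
    q (C (Lam lam (m - i) (i + 1) * pad n r (m - i)) * Xn n m)) with hT
  have hT0 : ∀ m, n ≤ m → T m = 0 := by
    intro m hmn
    rw [hT]
    show q (C _ * Xn n m) = 0
    rw [show Xn n m = (0 : MvPolynomial (Fin n) A) from dif_neg (by omega), mul_zero, map_zero]
  have hL : sFun n lam hs ha (r * eb n lam hs ha (i + 1))
      = ∑ j ∈ Finset.range n, (if i ≤ j then T j else 0) := by
    unfold sFun
    have hc0 : (r * eb n lam hs ha (i + 1)) ⟨0, by omega⟩ = 0 := by
      rw [hsr_mul_apply_zero, eb_apply, if_neg (show ¬(0:ℕ) = i + 1 by omega), mul_zero]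
    rw [hc0, C_0, zero_add, map_sum]
    refine Finset.sum_congr rfl fun j hj => ?_
    rw [Finset.mem_range] at hj
    rw [pad_mul_eb n lam hs ha r hi (by omega : j + 1 ≤ n)]
    rw [show j + 1 - (i + 1) = j - i by omega]
    by_cases hij : i ≤ j
    · rw [if_pos (by omega : i + 1 ≤ j + 1), if_pos hij, hT]
    · rw [if_neg (by omega : ¬ i + 1 ≤ j + 1), if_neg hij, C_0, zero_mul, map_zero]
  have hR : sFun n lam hs ha r * q (Xn n i)
      = q (C (r ⟨0, by omega⟩) * Xn n i) + ∑ j ∈ Finset.range n, T (j + i + 1) := by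
    unfold sFun
    rw [← map_mul, add_mul, Finset.sum_mul, map_add, map_sum]
    congr 1
    refine Finset.sum_congr rfl fun j hj => ?_
    rw [mul_assoc, map_mul, q_XX, ← map_mul, ← mul_assoc, ← C_mul,
      mul_comm (pad n r (j + 1)) (Lam lam (j + 1) (i + 1)), hT]
    show _ = q (C (Lam lam (j + i + 1 - i) (i + 1) * pad n r (j + i + 1 - i)) * Xn n (j + i + 1))
    rw [show j + i + 1 - i = j + 1 by omega]
  rw [hL, hR]
  have e1 : ∑ j ∈ Finset.range n, (if i ≤ j then T j else 0)
      = ∑ j ∈ Finset.Ico i n, T j := by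
    rw [← Finset.sum_filter]
    congr 1
    ext x
    simp only [Finset.mem_filter, Finset.mem_range, Finset.mem_Ico]
    omega
  have e2 : ∑ j ∈ Finset.Ico i n, T j = T i + ∑ j ∈ Finset.Ico (i + 1) n, T j :=
    Finset.sum_eq_sum_Ico_succ_bot hi T
  have e3 : T i = q (C (r ⟨0, by omega⟩) * Xn n i) := by
    rw [hT]
    show q (C (Lam lam (i - i) (i + 1) * pad n r (i - i)) * Xn n i) = _
    erw [Nat.sub_self, Lam_zero_left, one_mul, pad_le n (by omega : 0 < n + 1)]
  have e4 : ∑ j ∈ Finset.range n, T (j + i + 1) = ∑ j ∈ Finset.Ico (i + 1) n, T j := by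
    have h4a : ∑ j ∈ Finset.range n, T (j + i + 1)
        = ∑ j ∈ Finset.range n, T (i + 1 + j) :=
      Finset.sum_congr rfl fun j _ => by rw [show j + i + 1 = i + 1 + j by omega]
    have h4b : ∑ j ∈ Finset.Ico (i + 1) (n + i + 1), T j
        = ∑ j ∈ Finset.range (n + i + 1 - (i + 1)), T (i + 1 + j) := by
      rw [Finset.sum_Ico_eq_sum_range]
    rw [show n + i + 1 - (i + 1) = n by omega] at h4b
    have h4c : ∑ j ∈ Finset.Ico (i + 1) n, T j + ∑ j ∈ Finset.Ico n (n + i + 1), T j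
        = ∑ j ∈ Finset.Ico (i + 1) (n + i + 1), T j :=
      Finset.sum_Ico_consecutive T (by omega) (by omega)
    have h4d : ∑ j ∈ Finset.Ico n (n + i + 1), T j = 0 :=
      Finset.sum_eq_zero fun m hm => hT0 m (by rw [Finset.mem_Ico] at hm; omega)
    rw [h4a, ← h4b, ← h4c, h4d, add_zero]
  rw [e1, e2, e3, e4]

lemma sFun_piHom (p : MvPolynomial (Fin n) A) :
    sFun n lam hs ha (piHom n lam hs ha p) = Ideal.Quotient.mk (Jideal n lam) p := by
  induction p using MvPolynomial.induction_on with
  | C a =>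
    rw [piHom_C]
    unfold sFun
    congr 1
    rw [embed_apply, if_pos rfl]
    have : ∀ j ∈ Finset.range n, C (pad n (embed n lam hs ha a) (j + 1)) * Xn n j
        = (0 : MvPolynomial (Fin n) A) := by
      intro j _
      rw [pad_embed, if_neg (by omega), C_0, zero_mul]
    rw [Finset.sum_congr rfl this, Finset.sum_const_zero, add_zero]
  | add p p' ihp ihp' =>
    rw [map_add, sFun_add, ihp, ihp', map_add]
  | mul_X p i ih =>
    rw [map_mul, piHom_X, sFun_mul_X n lam hs ha _ i.2, ih, map_mul]
    congr 1
    rw [show Xn n i.1 = (X i : MvPolynomial (Fin n) A) by rw [Xn, dif_pos i.2]]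

lemma piBar_comp_zero (z : MvPolynomial (Fin n) A ⧸ Jideal n lam)
    (hz : z ∈ Ideal.span (Set.range fun i : Fin n =>
      (Ideal.Quotient.mk (Jideal n lam) (X i) : MvPolynomial (Fin n) A ⧸ Jideal n lam))) :
    piBar n lam hs ha z ⟨0, by omega⟩ = 0 := by
  refine Submodule.span_induction ?_ ?_ ?_ ?_ hz
  · rintro x ⟨i, rfl⟩
    rw [piBar_mk, piHom_X, eb_apply, if_neg (show ¬(0:ℕ) = i.1 + 1 by omega)]
  · rw [RingHom.map_zero, hsr_zero_apply]
  · intro x y hx hy ihx ihy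
    rw [RingHom.map_add, hsr_add_apply, ihx, ihy, add_zero]
  · intro c x hx ihx
    rw [smul_eq_mul, RingHom.map_mul, hsr_mul_apply_zero, ihx, mul_zero]

lemma hsr_sum_apply {ι : Type*} (s : Finset ι) (f : ι → HSR n lam hs ha) (m : Fin (n + 1)) :
    (∑ i ∈ s, f i) m = ∑ i ∈ s, f i m := by
  classical
  induction s using Finset.induction_on with
  | empty => rfl
  | insert a s hnotmem ih =>
    rw [Finset.sum_insert hnotmem, Finset.sum_insert hnotmem, hsr_add_apply, ih]

/-- the vector of components of a derivation -/
noncomputable def GFun (D : ∀ _ : Fin n, A → A) (a : A) : HSR n lam hs ha :=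
  fun m => if h : m.1 = 0 then a else D ⟨m.1 - 1, by omega⟩ a

lemma GFun_zero_apply (D : ∀ _ : Fin n, A → A) (a : A) :
    GFun n lam hs ha D a ⟨0, by omega⟩ = a := by
  simp [GFun]

lemma GFun_succ_apply (D : ∀ _ : Fin n, A → A) (a : A) {m : ℕ} (hm : m < n) :
    GFun n lam hs ha D a ⟨m + 1, by omega⟩ = D ⟨m, hm⟩ a := by
  simp [GFun]

lemma piHom_Fpoly (D : ∀ _ : Fin n, A → A) (a : A) :
    piHom n lam hs ha (C a + ∑ i : Fin n, C (D i a) * X i) = GFun n lam hs ha D a := by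
  rw [map_add, piHom_C, map_sum]
  funext m
  rw [hsr_add_apply]
  have hsum : (∑ i : Fin n, piHom n lam hs ha (C (D i a) * X i)) m
      = ∑ i : Fin n, (D i a * if m.1 = i.1 + 1 then 1 else 0) := by
    rw [hsr_sum_apply]
    refine Finset.sum_congr rfl fun i _ => ?_
    rw [map_mul, piHom_C, piHom_X, embed_mul_apply, eb_apply]
  rw [hsum, embed_apply]
  rcases m with ⟨mv, hmv⟩
  cases mv with
  | zero =>
    rw [GFun_zero_apply, if_pos rfl]
    have : ∀ i ∈ (Finset.univ : Finset (Fin n)),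
        (D i a * if (0 : ℕ) = i.1 + 1 then 1 else 0) = 0 := by
      intro i _
      rw [if_neg (by omega), mul_zero]
    rw [Finset.sum_congr rfl this, Finset.sum_const_zero, add_zero]
  | succ mm =>
    have hmm : mm < n := by omega
    rw [GFun_succ_apply n lam hs ha D a hmm, if_neg (show ¬(mm + 1 : ℕ) = 0 by omega), zero_add]
    rw [Finset.sum_eq_single (⟨mm, hmm⟩ : Fin n)]
    · rw [if_pos rfl, mul_one]
    · intro b _ hbne
      rw [if_neg (show ¬(mm + 1 : ℕ) = b.1 + 1 from
        fun hc => hbne (Fin.ext (show b.1 = mm by omega))), mul_zero]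
    · intro hnot
      exact absurd (Finset.mem_univ _) hnot

lemma GFun_mul_zero (D : ∀ _ : Fin n, A → A) (x y : A) :
    (GFun n lam hs ha D x * GFun n lam hs ha D y) ⟨0, by omega⟩ = x * y := by
  rw [hsr_mul_apply_zero, GFun_zero_apply, GFun_zero_apply]

lemma GFun_mul_succ (D : ∀ _ : Fin n, A → A) (x y : A) {m : ℕ} (hm : m < n) :
    (GFun n lam hs ha D x * GFun n lam hs ha D y) ⟨m + 1, by omega⟩
      = x * D ⟨m, hm⟩ y + y * D ⟨m, hm⟩ x
        + ∑ j : Fin m, lam (j.1 + 1) (m - j.1)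
            * D ⟨j.1, by omega⟩ x * D ⟨m - j.1 - 1, by omega⟩ y := by
  rw [hsr_mul_apply_succ n lam hs ha _ _ m (by omega)]
  rw [GFun_zero_apply, GFun_zero_apply, GFun_succ_apply n lam hs ha D y hm,
    GFun_succ_apply n lam hs ha D x hm]
  congr 1
  refine Finset.sum_congr rfl fun j _ => ?_
  have hj := j.2
  rw [GFun_succ_apply n lam hs ha D x (by omega : j.1 < n)]
  rw [show (⟨m - j.1, by omega⟩ : Fin (n + 1)) = ⟨(m - j.1 - 1) + 1, by omega⟩ from
    Fin.ext (show m - j.1 = m - j.1 - 1 + 1 by omega)]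
  rw [GFun_succ_apply n lam hs ha D y (by omega : m - j.1 - 1 < n)]

lemma hsr_sub_apply (x y : HSR n lam hs ha) (m : Fin (n + 1)) :
    (x - y) m = x m - y m := rfl

lemma GFun_mul (D : ∀ _ : Fin n, A → A)
    (hLeib : ∀ (i : Fin n) (x y : A), D i (x * y) = x * D i y + y * D i x
      + ∑ j : Fin i.1, lam (j.1 + 1) (i.1 - j.1)
          * D ⟨j.1, by have := j.2; have := i.2; omega⟩ x
          * D ⟨i.1 - j.1 - 1, by have := j.2; have := i.2; omega⟩ y)
    (x y : A) :
    GFun n lam hs ha D (x * y) = GFun n lam hs ha D x * GFun n lam hs ha D y := by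
  funext m
  rcases m with ⟨mv, hmv⟩
  cases mv with
  | zero =>
    rw [GFun_zero_apply, GFun_mul_zero]
  | succ mm =>
    have hmm : mm < n := by omega
    rw [GFun_succ_apply n lam hs ha D _ hmm, GFun_mul_succ n lam hs ha D x y hmm,
      hLeib ⟨mm, hmm⟩ x y]

variable (k : Type*) [CommRing k] [Algebra k A]

/-- the algebra homomorphism attached to a derivation -/
noncomputable def FAlg (D : ∀ _ : Fin n, A → A)
    (hadd : ∀ (i : Fin n) (x y : A), D i (x + y) = D i x + D i y)
    (halg : ∀ (i : Fin n) (c : k), D i (algebraMap k A c) = 0)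
    (hLeib : ∀ (i : Fin n) (x y : A), D i (x * y) = x * D i y + y * D i x
      + ∑ j : Fin i.1, lam (j.1 + 1) (i.1 - j.1)
          * D ⟨j.1, by have := j.2; have := i.2; omega⟩ x
          * D ⟨i.1 - j.1 - 1, by have := j.2; have := i.2; omega⟩ y) :
    A →ₐ[k] MvPolynomial (Fin n) A ⧸ Jideal n lam where
  toRingHom := RingHom.mk'
    { toFun := fun a => Ideal.Quotient.mk (Jideal n lam)
        (C a + ∑ i : Fin n, C (D i a) * X i)
      map_one' := by
        show Ideal.Quotient.mk (Jideal n lam) (C 1 + ∑ i : Fin n, C (D i 1) * X i) = 1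
        have hone : ∀ i : Fin n, D i 1 = 0 := by
          intro i
          have := halg i 1
          rwa [map_one] at this
        have hz : ∀ i ∈ (Finset.univ : Finset (Fin n)),
            C (D i 1) * X i = (0 : MvPolynomial (Fin n) A) := by
          intro i _
          rw [hone, C_0, zero_mul]
        rw [Finset.sum_congr rfl hz, Finset.sum_const_zero, add_zero, C_1, map_one]
      map_mul' := by
        intro x y
        calc Ideal.Quotient.mk (Jideal n lam) (C (x * y) + ∑ i : Fin n, C (D i (x * y)) * X i)
            = sFun n lam hs ha
              (piHom n lam hs ha (C (x * y) + ∑ i : Fin n, C (D i (x * y)) * X i)) :=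
              (sFun_piHom n lam hs ha _).symm
          _ = sFun n lam hs ha (GFun n lam hs ha D (x * y)) := by
              rw [piHom_Fpoly]
          _ = sFun n lam hs ha (GFun n lam hs ha D x * GFun n lam hs ha D y) := by
              rw [GFun_mul n lam hs ha D hLeib]
          _ = sFun n lam hs ha
              (piHom n lam hs ha (C x + ∑ i : Fin n, C (D i x) * X i)
                * piHom n lam hs ha (C y + ∑ i : Fin n, C (D i y) * X i)) := by
              rw [piHom_Fpoly, piHom_Fpoly]
          _ = sFun n lam hs ha
              (piHom n lam hs ha ((C x + ∑ i : Fin n, C (D i x) * X i)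
                * (C y + ∑ i : Fin n, C (D i y) * X i))) := by
              rw [map_mul]
          _ = Ideal.Quotient.mk (Jideal n lam) ((C x + ∑ i : Fin n, C (D i x) * X i)
                * (C y + ∑ i : Fin n, C (D i y) * X i)) :=
              sFun_piHom n lam hs ha _
          _ = Ideal.Quotient.mk (Jideal n lam) (C x + ∑ i : Fin n, C (D i x) * X i)
              * Ideal.Quotient.mk (Jideal n lam) (C y + ∑ i : Fin n, C (D i y) * X i) := by
              rw [map_mul] }
    (by
      intro x y
      show Ideal.Quotient.mk (Jideal n lam) _ = Ideal.Quotient.mk (Jideal n lam) _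
        + Ideal.Quotient.mk (Jideal n lam) _
      rw [← map_add]
      congr 1
      have hz : ∀ i ∈ (Finset.univ : Finset (Fin n)),
          C (D i (x + y)) * X i = C (D i x) * X i + C (D i y) * X i := by
        intro i _
        rw [hadd, C_add, add_mul]
      rw [Finset.sum_congr rfl hz, Finset.sum_add_distrib, C_add]
      ring)
  commutes' := by
    intro c
    show Ideal.Quotient.mk (Jideal n lam) _ = _
    have hz : ∀ i ∈ (Finset.univ : Finset (Fin n)),
        C (D i (algebraMap k A c)) * X i = (0 : MvPolynomial (Fin n) A) := by
      intro i _
      rw [halg, C_0, zero_mul]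
    rw [Finset.sum_congr rfl hz, Finset.sum_const_zero, add_zero,
      ← MvPolynomial.algebraMap_apply, Ideal.Quotient.mk_algebraMap]

lemma FAlg_apply (D : ∀ _ : Fin n, A → A) (hadd) (halg) (hLeib) (a : A) :
    FAlg n lam hs ha k D hadd halg hLeib a
      = Ideal.Quotient.mk (Jideal n lam) (C a + ∑ i : Fin n, C (D i a) * X i) := rfl

lemma cast_triv : ∀ (h : A = A) (z : A), cast h z = z := fun h z => eq_of_heq (cast_heq h z)

lemma raw_to_clean (D : ∀ _ : Fin n, A → A)
    (h : IsMultiHSDer (B := fun _ => A) k n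
      (fun i j (a a' : A) => lam i j * a * a') (fun _ => id) D) :
    ∀ (i : Fin n) (x y : A), D i (x * y) = x * D i y + y * D i x
      + ∑ j : Fin i.1, lam (j.1 + 1) (i.1 - j.1)
          * D ⟨j.1, by have := j.2; have := i.2; omega⟩ x
          * D ⟨i.1 - j.1 - 1, by have := j.2; have := i.2; omega⟩ y := by
  intro i x y
  have h7 := h.2.2.2.2.2.2 i x y
  simp only [cast_triv, id_eq] at h7
  exact h7

lemma clean_to_raw (D : ∀ _ : Fin n, A → A)
    (hadd : ∀ (i : Fin n) (x y : A), D i (x + y) = D i x + D i y)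
    (halg : ∀ (i : Fin n) (c : k), D i (algebraMap k A c) = 0)
    (hLeib : ∀ (i : Fin n) (x y : A), D i (x * y) = x * D i y + y * D i x
      + ∑ j : Fin i.1, lam (j.1 + 1) (i.1 - j.1)
          * D ⟨j.1, by have := j.2; have := i.2; omega⟩ x
          * D ⟨i.1 - j.1 - 1, by have := j.2; have := i.2; omega⟩ y) :
    IsMultiHSDer (B := fun _ => A) k n
      (fun i j (a a' : A) => lam i j * a * a') (fun _ => id) D := by
  refine ⟨fun i x y => rfl, fun i x y => rfl, fun i => rfl, fun i c => rfl,
    hadd, halg, fun i x y => ?_⟩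
  simp only [cast_triv, id_eq]
  exact hLeib i x y

end HSRsec

end HSAux

end HSAuxSec

/-- With `φ_{i,j}(a,a′) = λ_{i,j} a a′`, the assignment
`(D⃗₀,D₁,…,Dₙ) ↦ (a ↦ a + Σ D_i(a) t̄_i)` is a bijection from the set of multi
Hasse–Schmidt derivations of order `n` from `A` to `A,…,A` over `k` with respect to `φ`
and with `D₀ⁱ = Id_A`, onto the set of `k`-algebra homomorphisms
`F : A → A[t₁,…,tₙ]/Jₙ` with `F ≡ Id_A` modulo `⟨t̄₁,…,t̄ₙ⟩`. -/
theorem multiHSDer_equiv_hom_quotient (k : Type*) [CommRing k] {A : Type*} [CommRing A]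
    [Algebra k A] (n : ℕ) (hn : 1 ≤ n) (lam : ℕ → ℕ → A)
    (hsym : ∀ i j, 1 ≤ i → 1 ≤ j → i + j ≤ n → lam i j = lam j i)
    (hassoc : ∀ i j l, 1 ≤ i → 1 ≤ j → 1 ≤ l → i + j + l ≤ n →
      lam i j * lam (i + j) l = lam j l * lam i (j + l)) :
    ∃ e : {D : ∀ _ : Fin n, A → A //
            IsMultiHSDer (B := fun _ => A) k n
              (fun i j (a a' : A) => lam i j * a * a')
              (fun _ => id) D} ≃
        {F : A →ₐ[k] MvPolynomial (Fin n) A ⧸ Jideal n lam //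
          ∀ a : A, F a - Ideal.Quotient.mk (Jideal n lam) (C a) ∈
            Ideal.span (Set.range fun i : Fin n =>
              (Ideal.Quotient.mk (Jideal n lam) (X i) :
                MvPolynomial (Fin n) A ⧸ Jideal n lam))},
      ∀ D, ∀ a : A,
        (e D).1 a = Ideal.Quotient.mk (Jideal n lam)
          (C a + ∑ i : Fin n, C (D.1 i a) * X i) := by
  classical
  have hs : HSAux.LamSym n lam := hsym
  have ha : HSAux.LamAssoc n lam := hassoc
  set q : MvPolynomial (Fin n) A →+* MvPolynomial (Fin n) A ⧸ Jideal n lam :=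
    Ideal.Quotient.mk (Jideal n lam) with hqdef
  -- forward map
  set f : {D : ∀ _ : Fin n, A → A //
      IsMultiHSDer (B := fun _ => A) k n
        (fun i j (a a' : A) => lam i j * a * a')
        (fun _ => id) D} →
      {F : A →ₐ[k] MvPolynomial (Fin n) A ⧸ Jideal n lam //
        ∀ a : A, F a - Ideal.Quotient.mk (Jideal n lam) (C a) ∈
          Ideal.span (Set.range fun i : Fin n =>
            (Ideal.Quotient.mk (Jideal n lam) (X i) :
              MvPolynomial (Fin n) A ⧸ Jideal n lam))} :=
    fun Dp =>
      ⟨HSAux.FAlg n lam hs ha k Dp.1 Dp.2.2.2.2.2.1 Dp.2.2.2.2.2.2.1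
          (HSAux.raw_to_clean n lam k Dp.1 Dp.2),
        by
          intro a
          rw [HSAux.FAlg_apply, map_add, add_sub_cancel_left, map_sum]
          refine Ideal.sum_mem _ fun i _ => ?_
          rw [map_mul]
          exact Ideal.mul_mem_left _ _ (Ideal.subset_span ⟨i, rfl⟩)⟩
    with hfdef
  have hfval : ∀ Dp a, (f Dp).1 a
      = Ideal.Quotient.mk (Jideal n lam) (C a + ∑ i : Fin n, C (Dp.1 i a) * X i) :=
    fun Dp a => rfl
  have hbij : Function.Bijective f := by
    constructor
    · -- injective
      intro D1 D2 heq
      refine Subtype.ext (funext fun i => funext fun a => ?_)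
      have h1 : (f D1).1 a = (f D2).1 a := by rw [heq]
      rw [hfval, hfval] at h1
      have h2 : HSAux.GFun n lam hs ha D1.1 a = HSAux.GFun n lam hs ha D2.1 a := by
        rw [← HSAux.piHom_Fpoly n lam hs ha D1.1 a, ← HSAux.piHom_Fpoly n lam hs ha D2.1 a,
          ← HSAux.piBar_mk n lam hs ha, ← HSAux.piBar_mk n lam hs ha, h1]
      have h3 := congrFun h2 ⟨i.1 + 1, by omega⟩
      rwa [HSAux.GFun_succ_apply n lam hs ha D1.1 a i.2,
        HSAux.GFun_succ_apply n lam hs ha D2.1 a i.2] at h3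
    · -- surjective
      rintro ⟨F, hF⟩
      set D : ∀ _ : Fin n, A → A := fun i a =>
        HSAux.piBar n lam hs ha (F a) ⟨i.1 + 1, by omega⟩ with hDdef
      have hcomp0 : ∀ a : A, HSAux.piBar n lam hs ha (F a) ⟨0, by omega⟩ = a := by
        intro a
        have h1 := HSAux.piBar_comp_zero n lam hs ha _ (hF a)
        rw [RingHom.map_sub, HSAux.hsr_sub_apply, HSAux.piBar_mk, HSAux.piHom_C,
          HSAux.embed_apply, if_pos rfl, sub_eq_zero] at h1
        exact h1
      have hG : ∀ a : A, HSAux.piBar n lam hs ha (F a) = HSAux.GFun n lam hs ha D a := by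
        intro a
        funext m
        rcases m with ⟨mv, hmv⟩
        cases mv with
        | zero => rw [HSAux.GFun_zero_apply, hcomp0]
        | succ mm =>
          have hmm : mm < n := by omega
          rw [HSAux.GFun_succ_apply n lam hs ha D a hmm]
      have hadd : ∀ (i : Fin n) (x y : A), D i (x + y) = D i x + D i y := by
        intro i x y
        rw [hDdef]
        show HSAux.piBar n lam hs ha (F (x + y)) _ = _
        rw [map_add, RingHom.map_add, HSAux.hsr_add_apply]
      have halg : ∀ (i : Fin n) (c : k), D i (algebraMap k A c) = 0 := by
        intro i c
        rw [hDdef]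
        show HSAux.piBar n lam hs ha (F (algebraMap k A c)) _ = 0
        rw [AlgHom.commutes, ← Ideal.Quotient.mk_algebraMap, MvPolynomial.algebraMap_apply,
          HSAux.piBar_mk, HSAux.piHom_C, HSAux.embed_apply,
          if_neg (show ¬(i.1 + 1 : ℕ) = 0 by omega)]
      have hLeib : ∀ (i : Fin n) (x y : A), D i (x * y) = x * D i y + y * D i x
          + ∑ j : Fin i.1, lam (j.1 + 1) (i.1 - j.1)
              * D ⟨j.1, by have := j.2; have := i.2; omega⟩ x
              * D ⟨i.1 - j.1 - 1, by have := j.2; have := i.2; omega⟩ y := by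
        intro i x y
        have h1 : D i (x * y) = HSAux.piBar n lam hs ha (F (x * y)) ⟨i.1 + 1, by omega⟩ := rfl
        rw [h1, map_mul, RingHom.map_mul, hG, hG,
          HSAux.GFun_mul_succ n lam hs ha D x y i.2]
      have hD : IsMultiHSDer (B := fun _ => A) k n
          (fun i j (a a' : A) => lam i j * a * a') (fun _ => id) D :=
        HSAux.clean_to_raw n lam k D hadd halg hLeib
      refine ⟨⟨D, hD⟩, Subtype.ext ?_⟩
      apply AlgHom.ext
      intro a
      rw [hfval]
      obtain ⟨pa, hpa⟩ := Ideal.Quotient.mk_surjective (F a)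
      calc Ideal.Quotient.mk (Jideal n lam) (C a + ∑ i : Fin n, C (D i a) * X i)
          = HSAux.sFun n lam hs ha
            (HSAux.piHom n lam hs ha (C a + ∑ i : Fin n, C (D i a) * X i)) :=
            (HSAux.sFun_piHom n lam hs ha _).symm
        _ = HSAux.sFun n lam hs ha (HSAux.GFun n lam hs ha D a) := by
            rw [HSAux.piHom_Fpoly]
        _ = HSAux.sFun n lam hs ha (HSAux.piBar n lam hs ha (F a)) := by rw [hG]
        _ = HSAux.sFun n lam hs ha (HSAux.piBar n lam hs ha
              (Ideal.Quotient.mk (Jideal n lam) pa)) := by rw [hpa]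
        _ = HSAux.sFun n lam hs ha (HSAux.piHom n lam hs ha pa) := by
            rw [HSAux.piBar_mk]
        _ = Ideal.Quotient.mk (Jideal n lam) pa := HSAux.sFun_piHom n lam hs ha _
        _ = F a := hpa
  exact ⟨Equiv.ofBijective f hbij, fun Dp a => hfval Dp a⟩
end

section
/- Let K be a field of characteristic zero, A = B₁ = K[x], B₂ = K[x,y], and ι : K[x] → K[x,y] the inclusion. Let D₂ : K[x] → K[x,y] be given by D₂(f) = y·f′ + (1/2)·f″. Then there is no Hasse–Schmidt derivation (E₀, E₁, E₂) of order 2 from K[x] to K[x] over K satisfying ι ∘ E₂ = D₂. (In fact, there is no map E₂ : K[x] → K[x] at all with ι ∘ E₂ = D₂, since D₂(x) = y does not lie in the image of ι. In particular, the map α₁ from Hasse–Schmidt derivations of order 2 from A to B₁ to multi Hasse–Schmidt derivations is not surjective.) -/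
/-- A Hasse–Schmidt derivation `(E₀,E₁,E₂)` of order `2` from `A` to `B` over `k`. -/
def IsHSDer2 (k A B : Type*) [CommRing k] [CommRing A] [CommRing B]
    [Algebra k A] [Algebra k B] (E0 E1 E2 : A → B) : Prop :=
  (∀ x y : A, E0 (x * y) = E0 x * E0 y) ∧
  (∀ x y : A, E0 (x + y) = E0 x + E0 y) ∧
  (E0 1 = 1) ∧
  (∀ c : k, E0 (algebraMap k A c) = algebraMap k B c) ∧
  (∀ x y : A, E1 (x + y) = E1 x + E1 y) ∧
  (∀ c : k, E1 (algebraMap k A c) = 0) ∧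
  (∀ x y : A, E2 (x + y) = E2 x + E2 y) ∧
  (∀ c : k, E2 (algebraMap k A c) = 0) ∧
  (∀ x y : A, E1 (x * y) = E0 x * E1 y + E0 y * E1 x) ∧
  (∀ x y : A, E2 (x * y) = E0 x * E2 y + E1 x * E1 y + E2 x * E0 y)

/-- Let `K` be a field of characteristic zero, `ι : K[x] → K[x,y]` the inclusion
(`x ↦ X 0`, `y = X 1`) and `D₂ : K[x] → K[x,y]`, `D₂(f) = y f′ + (1/2) f″`.  Then there
is no Hasse–Schmidt derivation `(E₀,E₁,E₂)` of order 2 from `K[x]` to `K[x]` over `K`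
with `ι ∘ E₂ = D₂`; in fact there is no map `E₂ : K[x] → K[x]` at all with
`ι ∘ E₂ = D₂`.  (So the map `α₁` is not surjective.) -/
theorem no_lift_of_D2 (K : Type*) [Field K] [CharZero K] :
    (¬ ∃ E0 E1 E2 : Polynomial K → Polynomial K,
      IsHSDer2 K (Polynomial K) (Polynomial K) E0 E1 E2 ∧
      ∀ f : Polynomial K,
        Polynomial.aeval (MvPolynomial.X (0 : Fin 2)) (E2 f) =
          MvPolynomial.X (1 : Fin 2) *
              Polynomial.aeval (MvPolynomial.X (0 : Fin 2)) (Polynomial.derivative f) +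
            MvPolynomial.C (1 / 2 : K) *
              Polynomial.aeval (MvPolynomial.X (0 : Fin 2))
                (Polynomial.derivative (Polynomial.derivative f))) ∧
    (¬ ∃ E2 : Polynomial K → Polynomial K,
      ∀ f : Polynomial K,
        Polynomial.aeval (MvPolynomial.X (0 : Fin 2)) (E2 f) =
          MvPolynomial.X (1 : Fin 2) *
              Polynomial.aeval (MvPolynomial.X (0 : Fin 2)) (Polynomial.derivative f) +
            MvPolynomial.C (1 / 2 : K) *
              Polynomial.aeval (MvPolynomial.X (0 : Fin 2))
                (Polynomial.derivative (Polynomial.derivative f))) := by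
  have key : ¬ ∃ E2 : Polynomial K → Polynomial K,
      ∀ f : Polynomial K,
        Polynomial.aeval (MvPolynomial.X (0 : Fin 2)) (E2 f) =
          MvPolynomial.X (1 : Fin 2) *
              Polynomial.aeval (MvPolynomial.X (0 : Fin 2)) (Polynomial.derivative f) +
            MvPolynomial.C (1 / 2 : K) *
              Polynomial.aeval (MvPolynomial.X (0 : Fin 2))
                (Polynomial.derivative (Polynomial.derivative f)) := by
    rintro ⟨E2, h⟩
    have h1 := h Polynomial.X
    simp at h1
    -- h1 : aeval (X 0) (E2 X) = X 1
    have c0 := congrArg (MvPolynomial.eval (fun i : Fin 2 => if i = 1 then (0:K) else 0)) h1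
    have c1 := congrArg (MvPolynomial.eval (fun i : Fin 2 => if i = 1 then (1:K) else 0)) h1
    have e0 : ∀ (v : Fin 2 → K) (g : Polynomial K),
        MvPolynomial.eval v (Polynomial.aeval (MvPolynomial.X (0 : Fin 2)) g) =
          Polynomial.eval (v 0) g := by
      intro v g
      induction g using Polynomial.induction_on with
      | C a => simp
      | add p q hp hq => simp [hp, hq]
      | monomial n a ih => simp [pow_succ, ← mul_assoc, ih]
    rw [e0] at c0 c1
    simp at c0 c1
    rw [c0] at c1
    exact zero_ne_one c1
  refine ⟨?_, key⟩
  rintro ⟨E0, E1, E2, _, h⟩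
  exact key ⟨E2, h⟩
end

section
/- Let K be a field of characteristic zero, A = B₁ = K[x,y], B₂ = K[x,y]/⟨y⟩, and π : B₁ → B₂ the projection. Define E = (Id_A, E₁, E₂) and E′ = (Id_A, E₁′, E₂′) with E₁ = E₁′ = y·∂/∂x, E₂ = (1/2)y²·∂²/∂x², and E₂′ = y·∂/∂x + (1/2)y²·∂²/∂x², all maps K[x,y] → K[x,y]. Then E and E′ are both Hasse–Schmidt derivations of order 2 from A to B₁ over K, E₂ ≠ E₂′ (so E ≠ E′), and yet π ∘ E₂ = π ∘ E₂′ = 0. (In particular, the map α₁ composing the second-order component with π is not injective.) -/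
/-- Let `K` be a field of characteristic zero, `A = B₁ = K[x,y]` (`x = X 0`, `y = X 1`),
`B₂ = K[x,y]/⟨y⟩` and `π` the projection.  Then `E = (Id, y∂ₓ, ½y²∂ₓ²)` and
`E′ = (Id, y∂ₓ, y∂ₓ + ½y²∂ₓ²)` are both Hasse–Schmidt derivations of order 2 from `A` to
`B₁` over `K`, with `E₂ ≠ E₂′`, and yet `π ∘ E₂ = π ∘ E₂′ = 0`.  (So the map `α₁` is
not injective.) -/
theorem alpha_not_injective_example (K : Type*) [Field K] [CharZero K] :
    IsHSDer2 K (MvPolynomial (Fin 2) K) (MvPolynomial (Fin 2) K) id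
      (fun f => MvPolynomial.X (1 : Fin 2) * MvPolynomial.pderiv (0 : Fin 2) f)
      (fun f => MvPolynomial.C (1 / 2 : K) * MvPolynomial.X (1 : Fin 2) ^ 2 *
        MvPolynomial.pderiv (0 : Fin 2) (MvPolynomial.pderiv (0 : Fin 2) f)) ∧
    IsHSDer2 K (MvPolynomial (Fin 2) K) (MvPolynomial (Fin 2) K) id
      (fun f => MvPolynomial.X (1 : Fin 2) * MvPolynomial.pderiv (0 : Fin 2) f)
      (fun f => MvPolynomial.X (1 : Fin 2) * MvPolynomial.pderiv (0 : Fin 2) f +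
        MvPolynomial.C (1 / 2 : K) * MvPolynomial.X (1 : Fin 2) ^ 2 *
          MvPolynomial.pderiv (0 : Fin 2) (MvPolynomial.pderiv (0 : Fin 2) f)) ∧
    ((fun f => MvPolynomial.C (1 / 2 : K) * MvPolynomial.X (1 : Fin 2) ^ 2 *
        MvPolynomial.pderiv (0 : Fin 2) (MvPolynomial.pderiv (0 : Fin 2) f)) ≠
      (fun f => MvPolynomial.X (1 : Fin 2) * MvPolynomial.pderiv (0 : Fin 2) f +
        MvPolynomial.C (1 / 2 : K) * MvPolynomial.X (1 : Fin 2) ^ 2 *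
          MvPolynomial.pderiv (0 : Fin 2) (MvPolynomial.pderiv (0 : Fin 2) f))) ∧
    (∀ f : MvPolynomial (Fin 2) K,
      Ideal.Quotient.mk (Ideal.span {MvPolynomial.X (1 : Fin 2)})
        (MvPolynomial.C (1 / 2 : K) * MvPolynomial.X (1 : Fin 2) ^ 2 *
          MvPolynomial.pderiv (0 : Fin 2) (MvPolynomial.pderiv (0 : Fin 2) f)) = 0) ∧
    (∀ f : MvPolynomial (Fin 2) K,
      Ideal.Quotient.mk (Ideal.span {MvPolynomial.X (1 : Fin 2)})
        (MvPolynomial.X (1 : Fin 2) * MvPolynomial.pderiv (0 : Fin 2) f +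
          MvPolynomial.C (1 / 2 : K) * MvPolynomial.X (1 : Fin 2) ^ 2 *
            MvPolynomial.pderiv (0 : Fin 2) (MvPolynomial.pderiv (0 : Fin 2) f)) = 0) := by
  classical
  have h2 : (2 : MvPolynomial (Fin 2) K) * MvPolynomial.C (1/2 : K) = 1 := by
    rw [show (2 : MvPolynomial (Fin 2) K) = MvPolynomial.C (2 : K) from (map_ofNat _ 2).symm,
      ← MvPolynomial.C_mul]
    norm_num
  refine ⟨?_, ?_, ?_, ?_, ?_⟩
  · refine ⟨fun x y => rfl, fun x y => rfl, rfl, fun c => rfl, ?_, ?_, ?_, ?_, ?_, ?_⟩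
    · intro x y; simp [mul_add]
    · intro c; simp [MvPolynomial.algebraMap_eq]
    · intro x y; simp [mul_add]
    · intro c; simp [MvPolynomial.algebraMap_eq]
    · intro x y; simp [MvPolynomial.pderiv_mul]; ring
    · intro x y
      simp only [MvPolynomial.pderiv_mul, map_add, id]
      linear_combination MvPolynomial.X (1 : Fin 2)^2 * MvPolynomial.pderiv (0 : Fin 2) x *
        MvPolynomial.pderiv (0 : Fin 2) y * h2
  · refine ⟨fun x y => rfl, fun x y => rfl, rfl, fun c => rfl, ?_, ?_, ?_, ?_, ?_, ?_⟩
    · intro x y; simp [mul_add]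
    · intro c; simp [MvPolynomial.algebraMap_eq]
    · intro x y; simp [mul_add]; ring
    · intro c; simp [MvPolynomial.algebraMap_eq]
    · intro x y; simp [MvPolynomial.pderiv_mul]; ring
    · intro x y
      simp only [MvPolynomial.pderiv_mul, map_add, id]
      linear_combination MvPolynomial.X (1 : Fin 2)^2 * MvPolynomial.pderiv (0 : Fin 2) x *
        MvPolynomial.pderiv (0 : Fin 2) y * h2
  · intro h
    have := congrFun h (MvPolynomial.X (0 : Fin 2))
    simp [MvPolynomial.pderiv_X] at this
    exact MvPolynomial.X_ne_zero _ this.symm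
  · intro f
    rw [Ideal.Quotient.eq_zero_iff_mem, Ideal.mem_span_singleton]
    exact ⟨MvPolynomial.C (1/2 : K) * MvPolynomial.X (1 : Fin 2) *
      MvPolynomial.pderiv (0 : Fin 2) (MvPolynomial.pderiv (0 : Fin 2) f), by ring⟩
  · intro f
    rw [Ideal.Quotient.eq_zero_iff_mem, Ideal.mem_span_singleton]
    exact ⟨MvPolynomial.pderiv (0 : Fin 2) f + MvPolynomial.C (1/2 : K) *
      MvPolynomial.X (1 : Fin 2) *
      MvPolynomial.pderiv (0 : Fin 2) (MvPolynomial.pderiv (0 : Fin 2) f), by ring⟩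
end

section
/- Let k be a commutative ring, A a k-algebra, and B₁, B₂, B₃ be A-algebras. For i < j in {1,2,3}, let φ_{ij} : B_i → B_j be k-algebra homomorphisms with φ_{13} = φ_{23} ∘ φ_{12}. Fix x ∈ B₂, y₁ ∈ B₃, and set y₂ := φ₂₃(x) ∈ B₃. Define φ_{1,1} : B₁ × B₁ → B₂ by (b,b′) ↦ x·φ₁₂(bb′) and φ_{1,2} = φ_{2,1} : B₁ × B₂ → B₃ by (b,b′) ↦ y₁y₂·φ₁₃(b)·φ₂₃(b′). Let (D₀, D₁, D₂, D₃) be a Hasse–Schmidt derivation of order 3 from A to B₁ over k, and set D₀¹ = D₀, D₀ⁱ = φ_{1i} ∘ D₀ for i = 2,3, D⃗₀ = (D₀¹, D₀², D₀³), E₁ = D₁, E₂ = x·(φ₁₂ ∘ D₂), and E₃ = y₁y₂²·(φ₁₃ ∘ D₃). Then (D⃗₀, E₁, E₂, E₃) is a multi Hasse–Schmidt derivation of order 3 from A to B₁, B₂, B₃ over k with respect to φ = {φ_{1,1}, φ_{1,2}, φ_{2,1}}. -/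
/-- A Hasse–Schmidt derivation `(D₀,D₁,D₂,D₃)` of order `3` from `A` to `B` over `k`. -/
def IsHSDer3 (k A B : Type*) [CommRing k] [CommRing A] [CommRing B]
    [Algebra k A] [Algebra k B] (D0 D1 D2 D3 : A → B) : Prop :=
  (∀ a b : A, D0 (a * b) = D0 a * D0 b) ∧
  (∀ a b : A, D0 (a + b) = D0 a + D0 b) ∧
  (D0 1 = 1) ∧
  (∀ c : k, D0 (algebraMap k A c) = algebraMap k B c) ∧
  (∀ a b : A, D1 (a + b) = D1 a + D1 b) ∧ (∀ c : k, D1 (algebraMap k A c) = 0) ∧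
  (∀ a b : A, D2 (a + b) = D2 a + D2 b) ∧ (∀ c : k, D2 (algebraMap k A c) = 0) ∧
  (∀ a b : A, D3 (a + b) = D3 a + D3 b) ∧ (∀ c : k, D3 (algebraMap k A c) = 0) ∧
  (∀ a b : A, D1 (a * b) = D0 a * D1 b + D1 a * D0 b) ∧
  (∀ a b : A, D2 (a * b) = D0 a * D2 b + D1 a * D1 b + D2 a * D0 b) ∧
  (∀ a b : A, D3 (a * b) = D0 a * D3 b + D1 a * D2 b + D2 a * D1 b + D3 a * D0 b)

/-- A multi Hasse–Schmidt derivation `((D₀¹,D₀²,D₀³),E₁,E₂,E₃)` of order `3` from `A` to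
`B₁, B₂, B₃` over `k` with respect to `φ = {φ_{1,1}, φ_{1,2}, φ_{2,1}}`. -/
def IsMultiHSDer3 (k A B1 B2 B3 : Type*) [CommRing k] [CommRing A] [CommRing B1]
    [CommRing B2] [CommRing B3] [Algebra k A] [Algebra k B1] [Algebra k B2] [Algebra k B3]
    (φ11 : B1 → B1 → B2) (φ12 : B1 → B2 → B3) (φ21 : B2 → B1 → B3)
    (D01 : A → B1) (D02 : A → B2) (D03 : A → B3)
    (E1 : A → B1) (E2 : A → B2) (E3 : A → B3) : Prop :=
  (∀ a b : A, D01 (a * b) = D01 a * D01 b) ∧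
  (∀ a b : A, D01 (a + b) = D01 a + D01 b) ∧
  (D01 1 = 1) ∧
  (∀ c : k, D01 (algebraMap k A c) = algebraMap k B1 c) ∧
  (∀ a b : A, D02 (a * b) = D02 a * D02 b) ∧
  (∀ a b : A, D02 (a + b) = D02 a + D02 b) ∧
  (D02 1 = 1) ∧
  (∀ c : k, D02 (algebraMap k A c) = algebraMap k B2 c) ∧
  (∀ a b : A, D03 (a * b) = D03 a * D03 b) ∧
  (∀ a b : A, D03 (a + b) = D03 a + D03 b) ∧
  (D03 1 = 1) ∧
  (∀ c : k, D03 (algebraMap k A c) = algebraMap k B3 c) ∧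
  (∀ a b : A, E1 (a + b) = E1 a + E1 b) ∧ (∀ c : k, E1 (algebraMap k A c) = 0) ∧
  (∀ a b : A, E2 (a + b) = E2 a + E2 b) ∧ (∀ c : k, E2 (algebraMap k A c) = 0) ∧
  (∀ a b : A, E3 (a + b) = E3 a + E3 b) ∧ (∀ c : k, E3 (algebraMap k A c) = 0) ∧
  (∀ a b : A, E1 (a * b) = D01 a * E1 b + D01 b * E1 a) ∧
  (∀ a b : A, E2 (a * b) = D02 a * E2 b + D02 b * E2 a + φ11 (E1 a) (E1 b)) ∧
  (∀ a b : A, E3 (a * b) =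
    D03 a * E3 b + D03 b * E3 a + φ12 (E1 a) (E2 b) + φ21 (E2 a) (E1 b))

/-- Let `A` be a `k`-algebra, `B₁,B₂,B₃` be `A`-algebras, `φ_{ij} : B_i → B_j` be
`k`-algebra homomorphisms with `φ₁₃ = φ₂₃ ∘ φ₁₂`, and fix `x ∈ B₂`, `y₁ ∈ B₃`,
`y₂ := φ₂₃(x)`.  With `φ_{1,1}(b,b′) = x·φ₁₂(bb′)` and
`φ_{1,2}(b,b′) = φ_{2,1}(b′,b) = y₁y₂·φ₁₃(b)·φ₂₃(b′)`, every Hasse–Schmidt derivation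
`(D₀,D₁,D₂,D₃)` of order 3 from `A` to `B₁` over `k` gives rise to the multi
Hasse–Schmidt derivation `((D₀, φ₁₂∘D₀, φ₁₃∘D₀), D₁, x·(φ₁₂∘D₂), y₁y₂²·(φ₁₃∘D₃))` of
order 3 from `A` to `B₁,B₂,B₃` over `k` with respect to `φ`. -/
theorem example_multiHSDer_order_three (k A B1 B2 B3 : Type*) [CommRing k] [CommRing A]
    [CommRing B1] [CommRing B2] [CommRing B3] [Algebra k A]
    [Algebra k B1] [Algebra k B2] [Algebra k B3]
    [Algebra A B1] [Algebra A B2] [Algebra A B3]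
    (phi12 : B1 →ₐ[k] B2) (phi13 : B1 →ₐ[k] B3) (phi23 : B2 →ₐ[k] B3)
    (hcomp : phi13 = phi23.comp phi12)
    (x : B2) (y1 : B3)
    (D0 D1 D2 D3 : A → B1) (hD : IsHSDer3 k A B1 D0 D1 D2 D3) :
    IsMultiHSDer3 k A B1 B2 B3
      (fun b b' => x * phi12 (b * b'))
      (fun b b' => y1 * phi23 x * phi13 b * phi23 b')
      (fun b2 b1 => y1 * phi23 x * phi13 b1 * phi23 b2)
      D0
      (fun a => phi12 (D0 a))
      (fun a => phi13 (D0 a))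
      D1
      (fun a => x * phi12 (D2 a))
      (fun a => y1 * phi23 x ^ 2 * phi13 (D3 a)) := by
  obtain ⟨h0m, h0a, h01, h0c, h1a, h1c, h2a, h2c, h3a, h3c, h1m, h2m, h3m⟩ := hD
  subst hcomp
  refine ⟨h0m, h0a, h01, h0c, ?_, ?_, ?_, ?_, ?_, ?_, ?_, ?_, h1a, h1c, ?_, ?_, ?_, ?_,
      ?_, ?_, ?_⟩ <;> intros <;>
    simp only [AlgHom.coe_comp, Function.comp_apply, h0m, h0a, h01, h0c, h1m, h2m, h3m,
      h2a, h3a, h2c, h3c, map_mul, map_add, map_one, map_zero, mul_zero,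
      AlgHom.commutes] <;>
    ring
end
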